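/- arXiv:2107.08605 — 12 statements merged into one kernel-verified Lean document; each statement's English description precedes it below -/
import Mathlib

section
/- Let p be a smooth 2π-periodic support function of a hedgehog C and fix α ∈ (0, π). Then the function p_α(θ) := p(θ − α)·cos α + p'(θ − α)·sin α is a support function of the α-evolutoid of C; i.e., the hedgehog with support function p_α coincides (as a parameterized curve, up to reparameterization θ ↦ θ + α) with the curve γ_α(θ) = f(θ) + ρ(θ)·sin α·(cos α · t(θ) + sin α · n(θ)), where f is the hedgehog parameterization of C, ρ = p + p'' its radius of curvature, t(θ) = (−sin θ, cos θ), and n(θ) = (−cos θ, −sin θ). -/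
open Real

noncomputable def hedgehogParam (p : ℝ → ℝ) : ℝ → ℝ × ℝ :=
  fun θ => (p θ * Real.cos θ - deriv p θ * Real.sin θ,
            p θ * Real.sin θ + deriv p θ * Real.cos θ)

noncomputable def tangentVec (θ : ℝ) : ℝ × ℝ := (-Real.sin θ, Real.cos θ)

noncomputable def normalVec (θ : ℝ) : ℝ × ℝ := (-Real.cos θ, -Real.sin θ)

theorem stmt1 (p : ℝ → ℝ) (hp : ContDiff ℝ (⊤ : ℕ∞) p)
    (hper : Function.Periodic p (2 * Real.pi))
    (α : ℝ) (hα : α ∈ Set.Ioo 0 Real.pi)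
    (pα : ℝ → ℝ)
    (hpα : ∀ θ, pα θ = p (θ - α) * Real.cos α + deriv p (θ - α) * Real.sin α)
    (ρ : ℝ → ℝ) (hρ : ∀ θ, ρ θ = p θ + deriv (deriv p) θ) :
    ∀ θ : ℝ, hedgehogParam pα (θ + α)
      = hedgehogParam p θ
        + (ρ θ * Real.sin α) •
          (Real.cos α • tangentVec θ + Real.sin α • normalVec θ) := by
  have hp1 : Differentiable ℝ p := hp.differentiable (by simp)
  have hp2 : Differentiable ℝ (deriv p) := by
    have h2 : ContDiff ℝ (1+1) p := hp.of_le (by exact WithTop.coe_le_coe.mpr le_top)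
    exact (contDiff_succ_iff_deriv.mp h2).2.2.differentiable one_ne_zero
  have hpαeq : pα = fun θ => p (θ - α) * Real.cos α + deriv p (θ - α) * Real.sin α :=
    funext hpα
  have hderiv : ∀ x : ℝ, deriv pα x
      = deriv p (x - α) * Real.cos α + deriv (deriv p) (x - α) * Real.sin α := by
    intro x
    have h1 : HasDerivAt (fun θ : ℝ => p (θ - α)) (deriv p (x - α)) x := by
      simpa [Function.comp_def] using (hp1 (x - α)).hasDerivAt.comp x ((hasDerivAt_id x).sub_const α)
    have h2 : HasDerivAt (fun θ : ℝ => deriv p (θ - α)) (deriv (deriv p) (x - α)) x := by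
      simpa [Function.comp_def] using (hp2 (x - α)).hasDerivAt.comp x ((hasDerivAt_id x).sub_const α)
    have : HasDerivAt pα (deriv p (x - α) * Real.cos α + deriv (deriv p) (x - α) * Real.sin α) x := by
      rw [hpαeq]
      exact (h1.mul_const _).add (h2.mul_const _)
    exact this.deriv
  intro θ
  have e1 : pα (θ + α) = p θ * Real.cos α + deriv p θ * Real.sin α := by
    rw [hpα]; simp
  have e2 : deriv pα (θ + α) = deriv p θ * Real.cos α + deriv (deriv p) θ * Real.sin α := by
    rw [hderiv]; simp
  simp only [hedgehogParam, tangentVec, normalVec, Prod.ext_iff, Prod.smul_mk, Prod.mk_add_mk,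
    smul_eq_mul, Prod.fst_add, Prod.snd_add, Prod.smul_fst, Prod.smul_snd]
  rw [e1, e2, hρ, Real.cos_add, Real.sin_add]
  constructor
  · linear_combination (p θ * Real.cos θ - deriv p θ * Real.sin θ) * Real.sin_sq_add_cos_sq α
  · linear_combination (p θ * Real.sin θ + deriv p θ * Real.cos θ) * Real.sin_sq_add_cos_sq α
end

section
/- Let C be a smooth regular plane curve with arc-length parameterization f and radius of curvature ρ(s) > 0, and fix α ∈ (0, π). The parameterization γ_α(s) = f(s) + ρ(s) sin α cos α · t(s) + ρ(s) sin²α · n(s) of the α-evolutoid satisfies γ_α'(s) = 0 if and only if ρ'(s) = −cot α. -/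
open Real

noncomputable def evolutoid (f t n : ℝ → ℝ × ℝ) (ρ : ℝ → ℝ) (α : ℝ) :
    ℝ → ℝ × ℝ :=
  fun s => f s + (ρ s * Real.sin α * Real.cos α) • t s
    + (ρ s * Real.sin α ^ 2) • n s

theorem stmt2 (f t n : ℝ → ℝ × ℝ) (ρ : ℝ → ℝ)
    (hf : ContDiff ℝ (⊤ : ℕ∞) f) (hρ : ContDiff ℝ (⊤ : ℕ∞) ρ)
    (hρpos : ∀ s, 0 < ρ s)
    (ht : ∀ s, deriv f s = t s)
    (hunit : ∀ s, (t s).1 ^ 2 + (t s).2 ^ 2 = 1)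
    (hn : ∀ s, n s = (-(t s).2, (t s).1))
    (hFr1 : ∀ s, deriv t s = (ρ s)⁻¹ • n s)
    (hFr2 : ∀ s, deriv n s = -(ρ s)⁻¹ • t s)
    (α : ℝ) (hα : α ∈ Set.Ioo 0 Real.pi) :
    ∀ s, deriv (evolutoid f t n ρ α) s = 0 ↔ deriv ρ s = -Real.cot α := by
  intro s
  have hsa : Real.sin α ≠ 0 := ne_of_gt (Real.sin_pos_of_pos_of_lt_pi hα.1 hα.2)
  have hρne : ρ s ≠ 0 := ne_of_gt (hρpos s)
  have htfun : t = deriv f := funext fun s => (ht s).symm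
  have htc : ContDiff ℝ 1 (deriv f) := by
    have h2 : ContDiff ℝ ((1 + 1 : ℕ) : ℕ∞) f := hf.of_le (by exact_mod_cast le_top)
    simpa using (ContDiff.iterate_deriv' 1 1 (by exact_mod_cast h2))
  have htd : Differentiable ℝ t := by
    rw [htfun]; exact htc.differentiable (by norm_num)
  have hnd : Differentiable ℝ n := by
    have hne : n = fun s => (-(t s).2, (t s).1) := funext hn
    rw [hne]
    exact (htd.snd.neg).prodMk htd.fst
  have hdf : HasDerivAt f (t s) s := by
    have := ((hf.differentiable (by simp)) s).hasDerivAt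
    rwa [ht s] at this
  have hdt : HasDerivAt t ((ρ s)⁻¹ • n s) s := by
    have := (htd s).hasDerivAt
    rwa [hFr1 s] at this
  have hdn : HasDerivAt n (-(ρ s)⁻¹ • t s) s := by
    have := (hnd s).hasDerivAt
    rwa [hFr2 s] at this
  have hdρ : HasDerivAt ρ (deriv ρ s) s := ((hρ.differentiable (by simp)) s).hasDerivAt
  have hd : HasDerivAt (evolutoid f t n ρ α)
      (t s + ((ρ s * Real.sin α * Real.cos α) • ((ρ s)⁻¹ • n s)
        + (deriv ρ s * Real.sin α * Real.cos α) • t s)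
      + ((ρ s * Real.sin α ^ 2) • (-(ρ s)⁻¹ • t s)
        + (deriv ρ s * Real.sin α ^ 2) • n s)) s := by
    unfold evolutoid
    exact (hdf.add (((hdρ.mul_const _).mul_const _).smul hdt)).add
      ((hdρ.mul_const _).smul hdn)
  rw [hd.deriv]
  rw [Real.cot_eq_cos_div_sin]
  simp only [hn s, Prod.ext_iff, Prod.fst_add, Prod.snd_add, Prod.smul_fst, Prod.smul_snd,
    smul_eq_mul, Prod.fst_zero, Prod.snd_zero, Prod.mk.injEq, Prod.smul_mk]
  have hinv : ρ s * (ρ s)⁻¹ = 1 := mul_inv_cancel₀ hρne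
  have hpy := Real.sin_sq_add_cos_sq α
  constructor
  · rintro ⟨h1, h2⟩
    have key : Real.sin α * (Real.cos α + deriv ρ s * Real.sin α) = 0 := by
      linear_combination (-(t s).2) * h1 + (t s).1 * h2
        - (Real.sin α * Real.cos α * ((t s).1 ^ 2 + (t s).2 ^ 2)) * hinv
        - (Real.sin α * Real.cos α + deriv ρ s * Real.sin α ^ 2) * (hunit s)
    have h3 : Real.cos α + deriv ρ s * Real.sin α = 0 :=
      (mul_eq_zero.mp key).resolve_left hsa
    field_simp
    linarith
  · intro h
    have hks : deriv ρ s * Real.sin α = -Real.cos α := by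
      rw [h]; field_simp
    constructor
    · linear_combination (Real.sin α * Real.cos α * (-(t s).2)
          - Real.sin α ^ 2 * (t s).1) * hinv
        + (Real.cos α * (t s).1 - Real.sin α * (t s).2) * hks
        + (-(t s).1) * hpy
    · linear_combination (Real.sin α * Real.cos α * (t s).1
          - Real.sin α ^ 2 * (t s).2) * hinv
        + (Real.cos α * (t s).2 + Real.sin α * (t s).1) * hks
        + (-(t s).2) * hpy
end

section
/- Let C be a smooth regular plane curve with arc-length parameterization f, nonvanishing curvature κ = 1/ρ, and fix α ∈ (0, π). If s₀ is a singular point of the α-evolutoid parameterization γ_α (i.e., ρ'(s₀) = −cot α), then the vectors γ_α''(s₀) and γ_α'''(s₀) are linearly independent if and only if ρ''(s₀) ≠ 0. -/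
open Real

lemma li_pair_iff_det (u z : ℝ × ℝ) :
    LinearIndependent ℝ ![u, z] ↔ u.1 * z.2 - u.2 * z.1 ≠ 0 := by
  rw [LinearIndependent.pair_iff]
  constructor
  · intro h hd
    by_cases h1 : u.1 = 0 ∧ z.1 = 0
    · by_cases h2 : u.2 = 0 ∧ z.2 = 0
      · rcases h 1 0 (by ext <;> simp [h1.1, h2.1]) with ⟨h01, _⟩
        norm_num at h01
      · rcases h (-z.2) u.2 (by ext <;> simp [h1.1, h1.2] <;> ring) with ⟨e1, e2⟩
        exact h2 ⟨e2, by simpa using e1⟩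
    · rcases h (-z.1) u.1 (by ext <;> simp <;> nlinarith [hd]) with ⟨e1, e2⟩
      exact h1 ⟨e2, by simpa using e1⟩
  · intro hd s r hsr
    have h1 : s * u.1 + r * z.1 = 0 := congrArg Prod.fst hsr
    have h2 : s * u.2 + r * z.2 = 0 := congrArg Prod.snd hsr
    constructor
    · have : s * (u.1 * z.2 - u.2 * z.1) = 0 := by linear_combination z.2 * h1 - z.1 * h2
      exact (mul_eq_zero.mp this).resolve_right hd
    · have : r * (u.1 * z.2 - u.2 * z.1) = 0 := by linear_combination u.1 * h2 - u.2 * h1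
      exact (mul_eq_zero.mp this).resolve_right hd

theorem stmt3 (f t n : ℝ → ℝ × ℝ) (ρ : ℝ → ℝ)
    (hf : ContDiff ℝ (⊤ : ℕ∞) f) (hρ : ContDiff ℝ (⊤ : ℕ∞) ρ)
    (hρne : ∀ s, ρ s ≠ 0)
    (ht : ∀ s, deriv f s = t s)
    (hunit : ∀ s, (t s).1 ^ 2 + (t s).2 ^ 2 = 1)
    (hn : ∀ s, n s = (-(t s).2, (t s).1))
    (hFr1 : ∀ s, deriv t s = (ρ s)⁻¹ • n s)
    (hFr2 : ∀ s, deriv n s = -(ρ s)⁻¹ • t s)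
    (α : ℝ) (hα : α ∈ Set.Ioo 0 Real.pi)
    (s₀ : ℝ) (hsing : deriv ρ s₀ = -Real.cot α) :
    LinearIndependent ℝ
        ![iteratedDeriv 2 (evolutoid f t n ρ α) s₀,
          iteratedDeriv 3 (evolutoid f t n ρ α) s₀]
      ↔ deriv (deriv ρ) s₀ ≠ 0 := by
  replace hf : ContDiff ℝ (⊤ : ℕ∞) f := hf.of_le (by simp)
  replace hρ : ContDiff ℝ (⊤ : ℕ∞) ρ := hρ.of_le (by simp)
  have h1top : ((⊤ : ℕ∞) : WithTop ℕ∞) ≠ 0 := by simp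
  have hsn : Real.sin α ≠ 0 := ne_of_gt (Real.sin_pos_of_pos_of_lt_pi hα.1 hα.2)
  set c := Real.cos α with hc
  set sn := Real.sin α with hsndef
  have hpyth : sn ^ 2 + c ^ 2 = 1 := Real.sin_sq_add_cos_sq α
  -- smoothness of all ingredients
  have htf : t = deriv f := funext fun s => (ht s).symm
  have htc : ContDiff ℝ (⊤ : ℕ∞) t := htf ▸ (contDiff_infty_iff_deriv.mp hf).2
  have hnc : ContDiff ℝ (⊤ : ℕ∞) n := by
    have hne : n = fun s => (-(t s).2, (t s).1) := funext hn
    rw [hne]; exact (htc.snd.neg).prodMk htc.fst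
  have hρ'c : ContDiff ℝ (⊤ : ℕ∞) (deriv ρ) := (contDiff_infty_iff_deriv.mp hρ).2
  have hρ''c : ContDiff ℝ (⊤ : ℕ∞) (deriv (deriv ρ)) := (contDiff_infty_iff_deriv.mp hρ'c).2
  have hdt : ∀ s, DifferentiableAt ℝ t s := fun s => (htc.differentiable h1top).differentiableAt
  have hdn : ∀ s, DifferentiableAt ℝ n s := fun s => (hnc.differentiable h1top).differentiableAt
  have hdf : ∀ s, DifferentiableAt ℝ f s := fun s => (hf.differentiable h1top).differentiableAt
  have hdρ : ∀ s, DifferentiableAt ℝ ρ s := fun s => (hρ.differentiable h1top).differentiableAt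
  have hdρ' : ∀ s, DifferentiableAt ℝ (deriv ρ) s :=
    fun s => (hρ'c.differentiable h1top).differentiableAt
  -- key auxiliary functions
  set A : ℝ → ℝ := fun s => c + deriv ρ s * sn with hA
  set v : ℝ → ℝ × ℝ := fun s => c • t s + sn • n s with hv
  set w : ℝ → ℝ × ℝ := fun s => (-sn) • t s + c • n s with hw
  have hvc : ContDiff ℝ (⊤ : ℕ∞) v := (htc.const_smul c).add (hnc.const_smul sn)
  have hwc : ContDiff ℝ (⊤ : ℕ∞) w := (htc.const_smul (-sn)).add (hnc.const_smul c)
  have hAc : ContDiff ℝ (⊤ : ℕ∞) A := contDiff_const.add (hρ'c.mul contDiff_const)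
  have hdv : ∀ s, DifferentiableAt ℝ v s := fun s => (hvc.differentiable h1top).differentiableAt
  have hdw : ∀ s, DifferentiableAt ℝ w s := fun s => (hwc.differentiable h1top).differentiableAt
  have hdA : ∀ s, DifferentiableAt ℝ A s := fun s => (hAc.differentiable h1top).differentiableAt
  have hv' : ∀ s, deriv v s = (ρ s)⁻¹ • w s := by
    intro s
    rw [hv, hw]
    rw [deriv_fun_add (f := fun s => c • t s) (g := fun s => sn • n s) ((hdt s).const_smul c) ((hdn s).const_smul sn),
      deriv_fun_const_smul c (hdt s), deriv_fun_const_smul sn (hdn s), hFr1, hFr2]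
    module
  have hw' : ∀ s, deriv w s = (-(ρ s)⁻¹) • v s := by
    intro s
    rw [hw, hv]
    rw [deriv_fun_add (f := fun s => (-sn) • t s) (g := fun s => c • n s) ((hdt s).const_smul (-sn)) ((hdn s).const_smul c),
      deriv_fun_const_smul (-sn) (hdt s), deriv_fun_const_smul c (hdn s), hFr1, hFr2]
    module
  have hA' : ∀ s, deriv A s = deriv (deriv ρ) s * sn := by
    intro s
    rw [hA]
    rw [deriv_const_add, deriv_mul_const (hdρ' s)]
  -- first derivative of the evolutoid
  have hγ1 : deriv (evolutoid f t n ρ α) = fun s => A s • v s := by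
    funext s
    have hρinv : ρ s * (ρ s)⁻¹ = 1 := mul_inv_cancel₀ (hρne s)
    have dρ1 : DifferentiableAt ℝ (fun s => ρ s * sn * c) s := (hdρ s).mul_const sn |>.mul_const c
    have dρ2 : DifferentiableAt ℝ (fun s => ρ s * sn ^ 2) s := (hdρ s).mul_const _
    have dg1 : DifferentiableAt ℝ (fun s => (ρ s * sn * c) • t s) s := dρ1.smul (hdt s)
    have dg2 : DifferentiableAt ℝ (fun s => (ρ s * sn ^ 2) • n s) s := dρ2.smul (hdn s)
    unfold evolutoid
    rw [deriv_fun_add (f := fun s => f s + (ρ s * sn * c) • t s) (g := fun s => (ρ s * sn ^ 2) • n s)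
        ((hdf s).add dg1) dg2, deriv_fun_add (hdf s) dg1,
      deriv_fun_smul dρ1 (hdt s), deriv_fun_smul dρ2 (hdn s),
      deriv_mul_const ((hdρ s).mul_const sn) c, deriv_mul_const (hdρ s) sn,
      deriv_mul_const (hdρ s) (sn ^ 2),
      ht s, hFr1 s, hFr2 s, hA, hv]
    match_scalars
    · linear_combination (-sn ^ 2) * hρinv - hpyth
    · linear_combination (sn * c) * hρinv
  -- second derivative
  have hγ2 : deriv (deriv (evolutoid f t n ρ α))
      = fun s => deriv A s • v s + (A s * (ρ s)⁻¹) • w s := by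
    rw [hγ1]
    funext s
    rw [deriv_fun_smul (hdA s) (hdv s), hv' s]
    module
  -- value of A at the singular point
  have hA0 : A s₀ = 0 := by
    rw [hA]
    simp only [hsing, Real.cot_eq_cos_div_sin, ← hc, ← hsndef]
    field_simp
    ring
  -- differentiability of deriv A
  have hA'fun : deriv A = fun s => deriv (deriv ρ) s * sn := funext hA'
  have hdA' : ∀ s, DifferentiableAt ℝ (deriv A) s := by
    intro s
    rw [hA'fun]
    exact ((hρ''c.differentiable h1top).differentiableAt).mul_const sn
  have hdAρ : DifferentiableAt ℝ (fun s => A s * (ρ s)⁻¹) s₀ :=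
    (hdA s₀).mul ((hdρ s₀).inv (hρne s₀))
  -- third derivative at s₀
  have hγ3 : deriv (deriv (deriv (evolutoid f t n ρ α))) s₀
      = deriv (deriv A) s₀ • v s₀ + (2 * (deriv A s₀ * (ρ s₀)⁻¹)) • w s₀ := by
    rw [hγ2]
    rw [deriv_fun_add (f := fun s => deriv A s • v s) (g := fun s => (A s * (ρ s)⁻¹) • w s)
        ((hdA' s₀).smul (hdv s₀)) (hdAρ.smul (hdw s₀)),
      deriv_fun_smul (hdA' s₀) (hdv s₀), deriv_fun_smul hdAρ (hdw s₀),
      deriv_fun_mul (d := fun s => (ρ s)⁻¹) (hdA s₀) ((hdρ s₀).inv (hρne s₀)), hv' s₀, hA0]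
    module
  have h2 : iteratedDeriv 2 (evolutoid f t n ρ α) s₀ = deriv A s₀ • v s₀ := by
    simp only [iteratedDeriv_succ, iteratedDeriv_one, iteratedDeriv_zero, hγ2, hA0, zero_mul, zero_smul, add_zero]
  have h3 : iteratedDeriv 3 (evolutoid f t n ρ α) s₀
      = deriv (deriv A) s₀ • v s₀ + (2 * (deriv A s₀ * (ρ s₀)⁻¹)) • w s₀ := by
    simp only [iteratedDeriv_succ, iteratedDeriv_one, iteratedDeriv_zero]
    exact hγ3
  rw [h2, h3, li_pair_iff_det]
  -- compute the determinant
  have hdet : (deriv A s₀ • v s₀).1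
        * (deriv (deriv A) s₀ • v s₀ + (2 * (deriv A s₀ * (ρ s₀)⁻¹)) • w s₀).2
      - (deriv A s₀ • v s₀).2
        * (deriv (deriv A) s₀ • v s₀ + (2 * (deriv A s₀ * (ρ s₀)⁻¹)) • w s₀).1
      = 2 * sn ^ 2 * (deriv (deriv ρ) s₀) ^ 2 * (ρ s₀)⁻¹ := by
    simp only [hv, hw, hA' s₀, hn s₀, Prod.smul_fst, Prod.smul_snd, Prod.fst_add, Prod.snd_add,
      smul_eq_mul]
    linear_combination (2 * sn ^ 2 * (deriv (deriv ρ) s₀) ^ 2 * (ρ s₀)⁻¹ * (sn ^ 2 + c ^ 2))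
        * hunit s₀
      + (2 * sn ^ 2 * (deriv (deriv ρ) s₀) ^ 2 * (ρ s₀)⁻¹) * hpyth
  rw [hdet]
  constructor
  · intro h hd2
    rw [hd2] at h
    simp at h
  · intro hd2
    exact mul_ne_zero (mul_ne_zero (mul_ne_zero two_ne_zero (pow_ne_zero 2 hsn))
      (pow_ne_zero 2 hd2)) (inv_ne_zero (hρne s₀))
end

section
/- Let C be a smooth plane hedgehog with rotation number k and support function p: the oriented area of a k-hedgehog with support function q is Ã(q) = (1/2)∫₀^{2kπ} (q² − q'²) dθ. Then for every α ∈ [0, π], the oriented area of the α-evolutoid of C satisfies Ã(E_α(C)) = Ã(C)·cos²α + Ã(E_{π/2}(C))·sin²α, where E_{π/2}(C) is the evolute, whose support function is θ ↦ p'(θ − π/2). -/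
open Real

noncomputable def orientedArea (k : ℕ) (q : ℝ → ℝ) : ℝ :=
  (1 / 2) * ∫ θ in (0:ℝ)..(2 * k * Real.pi), (q θ ^ 2 - deriv q θ ^ 2)

private lemma periodic_deriv' {f : ℝ → ℝ} {T : ℝ} (hf : Function.Periodic f T) :
    Function.Periodic (deriv f) T := fun x => by
  have h : (fun y => f (y + T)) = f := funext hf
  rw [← deriv_comp_add_const, h]

private lemma shift_integral {f : ℝ → ℝ} {T : ℝ} (hf : Function.Periodic f T) (a : ℝ) :
    ∫ θ in (0:ℝ)..T, f (θ - a) = ∫ θ in (0:ℝ)..T, f θ := by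
  rw [intervalIntegral.integral_comp_sub_right]
  have := hf.intervalIntegral_add_eq (-a) 0
  simpa [zero_sub, sub_eq_neg_add] using this

theorem stmt4 (k : ℕ) (hk : 0 < k) (p : ℝ → ℝ) (hp : ContDiff ℝ (⊤ : ℕ∞) p)
    (hper : Function.Periodic p (2 * k * Real.pi)) :
    ∀ α ∈ Set.Icc (0:ℝ) Real.pi,
      orientedArea k
          (fun θ => p (θ - α) * Real.cos α + deriv p (θ - α) * Real.sin α)
        = orientedArea k p * Real.cos α ^ 2
          + orientedArea k (fun θ => deriv p (θ - Real.pi / 2))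
            * Real.sin α ^ 2 := by
  intro α hα
  set T : ℝ := 2 * k * Real.pi with hT
  -- smoothness facts
  have hpi : ContDiff ℝ ((⊤ : ℕ∞) : WithTop ℕ∞) p := hp.of_le (by simp)
  have hp1 : Differentiable ℝ p := hpi.differentiable (by simp)
  have hpd : ContDiff ℝ ((⊤ : ℕ∞) : WithTop ℕ∞) (deriv p) := (contDiff_infty_iff_deriv.mp hpi).2
  have hD1 : Differentiable ℝ (deriv p) := hpd.differentiable (by simp)
  have hpd2 : ContDiff ℝ ((⊤ : ℕ∞) : WithTop ℕ∞) (deriv (deriv p)) := (contDiff_infty_iff_deriv.mp hpd).2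
  -- periodicity facts
  have hperD : Function.Periodic (deriv p) T := periodic_deriv' hper
  have hperD2 : Function.Periodic (deriv (deriv p)) T := periodic_deriv' hperD
  -- derivative of the evolutoid support function
  have hdg : ∀ β θ : ℝ, deriv (fun θ => p (θ - β) * Real.cos β + deriv p (θ - β) * Real.sin β) θ
      = deriv p (θ - β) * Real.cos β + deriv (deriv p) (θ - β) * Real.sin β := by
    intro β θ
    have hsub : HasDerivAt (fun θ : ℝ => θ - β) 1 θ := (hasDerivAt_id θ).sub_const β
    have h1 : HasDerivAt (fun θ => p (θ - β)) (deriv p (θ - β)) θ := by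
      have h := ((hp1 (θ - β)).hasDerivAt).comp θ hsub; rw [mul_one] at h; exact h
    have h2 : HasDerivAt (fun θ => deriv p (θ - β)) (deriv (deriv p) (θ - β)) θ := by
      have h := ((hD1 (θ - β)).hasDerivAt).comp θ hsub; rw [mul_one] at h; exact h
    exact ((h1.mul_const _).add (h2.mul_const _)).deriv
  -- derivative of θ ↦ deriv p (θ - π/2)
  have hde : ∀ θ : ℝ, deriv (fun θ => deriv p (θ - Real.pi / 2)) θ
      = deriv (deriv p) (θ - Real.pi / 2) := fun θ =>
    deriv_comp_sub_const (deriv p) (Real.pi / 2) θ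
  -- derivative of p² - (p')²
  have hdh : ∀ θ : ℝ, HasDerivAt (fun θ => p θ ^ 2 - deriv p θ ^ 2)
      (2 * p θ * deriv p θ - 2 * deriv p θ * deriv (deriv p) θ) θ := by
    intro θ
    have := ((hp1 θ).hasDerivAt.pow 2).sub ((hD1 θ).hasDerivAt.pow 2)
    refine this.congr_deriv ?_
    push_cast
    ring
  -- continuity
  have cp : Continuous p := hp.continuous
  have cD : Continuous (deriv p) := hpd.continuous
  have cD2 : Continuous (deriv (deriv p)) := hpd2.continuous
  -- integrability
  have iA : IntervalIntegrable (fun θ => p θ ^ 2 - deriv p θ ^ 2) MeasureTheory.volume 0 T :=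
    ((cp.pow 2).sub (cD.pow 2)).intervalIntegrable _ _
  have iB : IntervalIntegrable (fun θ => deriv p θ ^ 2 - deriv (deriv p) θ ^ 2)
      MeasureTheory.volume 0 T := ((cD.pow 2).sub (cD2.pow 2)).intervalIntegrable _ _
  have iC : IntervalIntegrable
      (fun θ => 2 * p θ * deriv p θ - 2 * deriv p θ * deriv (deriv p) θ)
      MeasureTheory.volume 0 T := by
    apply Continuous.intervalIntegrable
    continuity
  -- ∫ of the exact derivative vanishes by periodicity
  have hcross : (∫ θ in (0:ℝ)..T, (2 * p θ * deriv p θ - 2 * deriv p θ * deriv (deriv p) θ)) = 0 := by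
    have : (∫ θ in (0:ℝ)..T, deriv (fun θ => p θ ^ 2 - deriv p θ ^ 2) θ)
        = (p T ^ 2 - deriv p T ^ 2) - (p 0 ^ 2 - deriv p 0 ^ 2) := by
      apply intervalIntegral.integral_deriv_eq_sub
      · exact fun x _ => ((hp1 x).pow 2).sub ((hD1 x).pow 2)
      · have heq2 : deriv (fun θ => p θ ^ 2 - deriv p θ ^ 2)
            = fun θ => 2 * p θ * deriv p θ - 2 * deriv p θ * deriv (deriv p) θ :=
          funext fun θ => (hdh θ).deriv
        rw [heq2]
        exact iC
    have heq : (fun θ => deriv (fun θ => p θ ^ 2 - deriv p θ ^ 2) θ)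
        = fun θ => 2 * p θ * deriv p θ - 2 * deriv p θ * deriv (deriv p) θ :=
      funext fun θ => (hdh θ).deriv
    rw [heq] at this
    rw [this]
    have e1 : p T = p 0 := by simpa using hper 0
    have e2 : deriv p T = deriv p 0 := by simpa using hperD 0
    rw [e1, e2]; ring
  -- the shifted integrand, as a periodic function
  set G : ℝ → ℝ := fun θ =>
    (p θ * Real.cos α + deriv p θ * Real.sin α) ^ 2
      - (deriv p θ * Real.cos α + deriv (deriv p) θ * Real.sin α) ^ 2 with hG
  have hGper : Function.Periodic G T := fun x => by
    simp only [hG, hper x, hperD x, hperD2 x]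
  set B : ℝ → ℝ := fun θ => deriv p θ ^ 2 - deriv (deriv p) θ ^ 2 with hB
  have hBper : Function.Periodic B T := fun x => by
    simp only [hB, hperD x, hperD2 x]
  -- rewrite the three orientedArea terms
  have lhs_eq : orientedArea k
      (fun θ => p (θ - α) * Real.cos α + deriv p (θ - α) * Real.sin α)
      = (1 / 2) * ∫ θ in (0:ℝ)..T, G θ := by
    rw [orientedArea, ← hT, ← shift_integral hGper α]
    congr 1
    apply intervalIntegral.integral_congr
    intro θ _
    simp only [hG, hdg α θ]
  have ev_eq : orientedArea k (fun θ => deriv p (θ - Real.pi / 2))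
      = (1 / 2) * ∫ θ in (0:ℝ)..T, B θ := by
    rw [orientedArea, ← hT, ← shift_integral hBper (Real.pi / 2)]
    congr 1
    apply intervalIntegral.integral_congr
    intro θ _
    simp only [hB, hde θ]
  -- expand G and split the integral
  have hGsplit : (∫ θ in (0:ℝ)..T, G θ)
      = Real.cos α ^ 2 * (∫ θ in (0:ℝ)..T, (p θ ^ 2 - deriv p θ ^ 2))
        + Real.sin α ^ 2 * (∫ θ in (0:ℝ)..T, B θ)
        + (Real.sin α * Real.cos α)
          * ∫ θ in (0:ℝ)..T, (2 * p θ * deriv p θ - 2 * deriv p θ * deriv (deriv p) θ) := by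
    have hcongr : (∫ θ in (0:ℝ)..T, G θ)
        = ∫ θ in (0:ℝ)..T, (Real.cos α ^ 2 * (p θ ^ 2 - deriv p θ ^ 2)
            + Real.sin α ^ 2 * B θ
            + (Real.sin α * Real.cos α)
              * (2 * p θ * deriv p θ - 2 * deriv p θ * deriv (deriv p) θ)) := by
      apply intervalIntegral.integral_congr
      intro θ _
      simp only [hG, hB]
      ring
    rw [hcongr,
      intervalIntegral.integral_add ((iA.const_mul _).add (iB.const_mul _)) (iC.const_mul _),
      intervalIntegral.integral_add (iA.const_mul _) (iB.const_mul _),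
      intervalIntegral.integral_const_mul, intervalIntegral.integral_const_mul,
      intervalIntegral.integral_const_mul]
  rw [lhs_eq, ev_eq, orientedArea, ← hT, hGsplit, hcross]
  ring
end

section
/- Let p be a smooth 2π-periodic support function of a 1-hedgehog C. Then the oriented area of the evolute of C, given by Ã(E_{π/2}(C)) = (1/2)∫₀^{2π}(p'²(θ) − p''²(θ))dθ, is non-positive, and it equals 0 if and only if p' + p''' ≡ 0 (equivalently, C is a circle). -/
open Real

section Wirt
open MeasureTheory Set intervalIntegral Complex AddCircle ContinuousMap

noncomputable section

instance fact2pi : Fact (0 < 2 * Real.pi) := ⟨Real.two_pi_pos⟩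

lemma wirt_periodic_deriv {E : Type*} [NormedAddCommGroup E] [NormedSpace ℝ E]
    {f : ℝ → E} {c : ℝ} (h : Function.Periodic f c) :
    Function.Periodic (deriv f) c := by
  intro x
  have hf : (fun y : ℝ => f (y + c)) = f := funext fun y => h y
  rw [← deriv_comp_add_const, hf]

lemma wirt_ae_ne (c : ℝ) : ∀ᵐ x : ℝ, x ≠ c := by
  rw [MeasureTheory.ae_iff]
  simp only [not_not]
  simpa using measure_singleton c

lemma wirt_liftIco_ae (g : ℝ → ℂ) :
    ∀ᵐ x : ℝ, x ∈ Set.uIoc (0:ℝ) (2 * Real.pi) →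
      AddCircle.liftIco (2*Real.pi) 0 g x = g x := by
  filter_upwards [wirt_ae_ne (2*Real.pi)] with x hx hmem
  rw [Set.uIoc_of_le Real.two_pi_pos.le] at hmem
  have hx' : x ∈ Set.Ico (0:ℝ) (0 + 2*Real.pi) :=
    ⟨hmem.1.le, by rw [zero_add]; exact lt_of_le_of_ne hmem.2 hx⟩
  exact AddCircle.liftIco_coe_apply hx'

lemma wirt_coeff_eq (g : ℝ → ℂ) (n : ℤ) :
    fourierCoeff (AddCircle.liftIco (2*Real.pi) 0 g) n
      = (1 / (2*Real.pi) : ℝ) •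
        ∫ x in (0:ℝ)..(2*Real.pi), (fourier (-n) (x : AddCircle (2*Real.pi)) : ℂ) * g x := by
  rw [fourierCoeff_eq_intervalIntegral _ n 0, zero_add]
  congr 1
  refine intervalIntegral.integral_congr_ae ?_
  filter_upwards [wirt_liftIco_ae g] with x hx hmem
  rw [smul_eq_mul, hx hmem]

lemma wirt_parseval (g : ℝ → ℂ) (hg : Continuous g)
    (hper : Function.Periodic g (2 * Real.pi)) :
    HasSum (fun n : ℤ => ‖fourierCoeff (AddCircle.liftIco (2*Real.pi) 0 g) n‖ ^ 2)
      ((1 / (2*Real.pi)) * ∫ x in (0:ℝ)..(2*Real.pi), ‖g x‖ ^ 2) := by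
  set G : C(AddCircle (2*Real.pi), ℂ) :=
    ⟨AddCircle.liftIco (2*Real.pi) 0 g,
      AddCircle.liftIco_continuous (by simpa using (hper 0).symm) hg.continuousOn⟩ with hG
  set F := ContinuousMap.toLp (E := ℂ) 2 haarAddCircle ℂ G with hF
  have hcoe : ∀ n : ℤ, fourierCoeff (F : AddCircle (2*Real.pi) → ℂ) n
      = fourierCoeff (AddCircle.liftIco (2*Real.pi) 0 g) n := fun n =>
    fourierCoeff_toLp G n
  have hsummable : Summable fun n : ℤ =>
      ‖fourierCoeff (AddCircle.liftIco (2*Real.pi) 0 g) n‖ ^ 2 := by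
    have h1 := (lp.memℓp (fourierBasis.repr F)).summable
      (by norm_num : (0:ℝ) < (2 : ENNReal).toReal)
    have h2 : ∀ n : ℤ, ‖fourierBasis.repr F n‖ ^ (2 : ENNReal).toReal
        = ‖fourierCoeff (AddCircle.liftIco (2*Real.pi) 0 g) n‖ ^ 2 := by
      intro n
      rw [fourierBasis_repr, hcoe n, ENNReal.toReal_ofNat]
      norm_cast
    exact (summable_congr h2).mp h1
  have htsum := tsum_sq_fourierCoeff F
  have hGF : ∫ t : AddCircle (2*Real.pi), ‖F t‖ ^ 2 ∂haarAddCircle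
      = ∫ t : AddCircle (2*Real.pi), ‖G t‖ ^ 2 ∂haarAddCircle := by
    refine integral_congr_ae ?_
    filter_upwards [ContinuousMap.coeFn_toLp (p := 2) haarAddCircle (𝕜 := ℂ) G] with t ht
    rw [ht]
  have hvol : ∫ t : AddCircle (2*Real.pi), ‖G t‖ ^ 2
      = (2*Real.pi) * ∫ t : AddCircle (2*Real.pi), ‖G t‖ ^ 2 ∂haarAddCircle := by
    rw [volume_eq_smul_haarAddCircle, MeasureTheory.integral_smul_measure,
      ENNReal.toReal_ofReal Real.two_pi_pos.le, smul_eq_mul]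
  have hint : ∫ x in (0:ℝ)..(2*Real.pi), ‖g x‖ ^ 2
      = ∫ t : AddCircle (2*Real.pi), ‖G t‖ ^ 2 := by
    rw [← AddCircle.intervalIntegral_preimage (2*Real.pi) 0
      (fun t : AddCircle (2*Real.pi) => ‖G t‖ ^ 2), zero_add]
    refine intervalIntegral.integral_congr_ae ?_
    filter_upwards [wirt_liftIco_ae g] with x hx hmem
    rw [show G (x : AddCircle (2*Real.pi)) = AddCircle.liftIco (2*Real.pi) 0 g x from rfl,
      hx hmem]
  have : (∑' n : ℤ, ‖fourierCoeff (AddCircle.liftIco (2*Real.pi) 0 g) n‖ ^ 2)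
      = (1 / (2*Real.pi)) * ∫ x in (0:ℝ)..(2*Real.pi), ‖g x‖ ^ 2 := by
    have := htsum
    simp_rw [hcoe] at this
    rw [this, hGF, hint, hvol]
    field_simp
  rw [← this]
  exact hsummable.hasSum

lemma wirt_coeff_deriv (g : ℝ → ℂ) (hg : ContDiff ℝ (((⊤:ℕ∞)) : WithTop ℕ∞) g)
    (hper : Function.Periodic g (2 * Real.pi)) (n : ℤ) :
    fourierCoeff (AddCircle.liftIco (2*Real.pi) 0 (deriv g)) n
      = (Complex.I * n) * fourierCoeff (AddCircle.liftIco (2*Real.pi) 0 g) n := by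
  have hone : (1 : WithTop ℕ∞) ≤ (((⊤:ℕ∞)) : WithTop ℕ∞) := by
    exact_mod_cast (le_top : (1:ℕ∞) ≤ ⊤)
  have hg' : Continuous (deriv g) := hg.continuous_deriv hone
  have hgc : Continuous g := hg.continuous
  have hfc : Continuous fun x : ℝ => (fourier (-n) (x : AddCircle (2*Real.pi)) : ℂ) :=
    (map_continuous (fourier (-n))).comp (AddCircle.continuous_mk' _)
  have hu : ∀ x ∈ Set.uIcc (0:ℝ) (2*Real.pi),
      HasDerivAt (fun y : ℝ => (fourier (-n) (y : AddCircle (2*Real.pi)) : ℂ))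
        ((-2 * Real.pi * Complex.I * n / ((2*Real.pi : ℝ) : ℂ))
          * fourier (-n) (x : AddCircle (2*Real.pi))) x :=
    fun x _ => hasDerivAt_fourier_neg (2*Real.pi) n x
  have hv : ∀ x ∈ Set.uIcc (0:ℝ) (2*Real.pi), HasDerivAt g (deriv g x) x :=
    fun x _ => (hg.differentiable (by simp) x).hasDerivAt
  have key := intervalIntegral.integral_deriv_mul_eq_sub hu hv
    ((continuous_const.mul hfc).intervalIntegrable _ _) (hg'.intervalIntegrable _ _)
  have hzero : (fourier (-n) ((2*Real.pi : ℝ) : AddCircle (2*Real.pi)) : ℂ) * g (2*Real.pi)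
      - (fourier (-n) ((0:ℝ) : AddCircle (2*Real.pi)) : ℂ) * g 0 = 0 := by
    have h1 : ((2*Real.pi : ℝ) : AddCircle (2*Real.pi)) = ((0:ℝ) : AddCircle (2*Real.pi)) := by
      rw [AddCircle.coe_period]
      norm_cast
    have h2 : g (2*Real.pi) = g 0 := by simpa using (hper 0)
    rw [h1, h2, sub_self]
  rw [hzero] at key
  rw [intervalIntegral.integral_add
    (f := fun x => (-2 * Real.pi * Complex.I * n / ((2*Real.pi : ℝ) : ℂ))
      * fourier (-n) (x : AddCircle (2*Real.pi)) * g x)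
    (g := fun x => (fourier (-n) (x : AddCircle (2*Real.pi)) : ℂ) * deriv g x)
    (((continuous_const.mul hfc).mul hgc).intervalIntegrable _ _)
    ((hfc.mul hg').intervalIntegrable _ _)] at key
  have hA : (∫ x in (0:ℝ)..(2*Real.pi),
        (-2 * Real.pi * Complex.I * n / ((2*Real.pi : ℝ) : ℂ))
          * fourier (-n) (x : AddCircle (2*Real.pi)) * g x)
      = (-(Complex.I * n)) *
          ∫ x in (0:ℝ)..(2*Real.pi), (fourier (-n) (x : AddCircle (2*Real.pi)) : ℂ) * g x := by
    rw [← intervalIntegral.integral_const_mul]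
    refine intervalIntegral.integral_congr fun x _ => ?_
    have hpi : ((Real.pi : ℝ) : ℂ) ≠ 0 := by exact_mod_cast Real.pi_ne_zero
    push_cast
    field_simp
  rw [hA] at key
  have hJ' : (∫ x in (0:ℝ)..(2*Real.pi),
        (fourier (-n) (x : AddCircle (2*Real.pi)) : ℂ) * deriv g x)
      = (Complex.I * n) *
          ∫ x in (0:ℝ)..(2*Real.pi), (fourier (-n) (x : AddCircle (2*Real.pi)) : ℂ) * g x := by
    linear_combination key
  rw [wirt_coeff_eq, wirt_coeff_eq, hJ', real_smul, real_smul]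
  ring

end
end Wirt

section MainProof
open MeasureTheory Set intervalIntegral Complex AddCircle ContinuousMap
open scoped ContDiff

theorem stmt5 (p : ℝ → ℝ) (hp : ContDiff ℝ (⊤ : ℕ∞) p)
    (hper : Function.Periodic p (2 * Real.pi)) :
    (1 / 2) * (∫ θ in (0:ℝ)..(2 * Real.pi),
        (deriv p θ ^ 2 - deriv (deriv p) θ ^ 2)) ≤ 0
    ∧ ((1 / 2) * (∫ θ in (0:ℝ)..(2 * Real.pi),
          (deriv p θ ^ 2 - deriv (deriv p) θ ^ 2)) = 0
        ↔ ∀ θ, deriv p θ + iteratedDeriv 3 p θ = 0) := by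
  have hone : (1 : WithTop ℕ∞) ≤ ∞ := by exact_mod_cast (le_top : (1:ℕ∞) ≤ ⊤)
  have hp0 : ContDiff ℝ ∞ p := hp.of_le (by simp)
  have hp1 : ContDiff ℝ ∞ (deriv p) := (contDiff_infty_iff_deriv.mp hp0).2
  have hp2 : ContDiff ℝ ∞ (deriv (deriv p)) := (contDiff_infty_iff_deriv.mp hp1).2
  have hp3 : ContDiff ℝ ∞ (deriv (deriv (deriv p))) := (contDiff_infty_iff_deriv.mp hp2).2
  have hc1 : Continuous (deriv p) := hp1.continuous
  have hc2 : Continuous (deriv (deriv p)) := hp2.continuous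
  have hc3 : Continuous (deriv (deriv (deriv p))) := hp3.continuous
  have hq1 : Function.Periodic (deriv p) (2*Real.pi) := wirt_periodic_deriv hper
  have hq2 : Function.Periodic (deriv (deriv p)) (2*Real.pi) := wirt_periodic_deriv hq1
  have hq3 : Function.Periodic (deriv (deriv (deriv p))) (2*Real.pi) := wirt_periodic_deriv hq2
  have hiter : iteratedDeriv 3 p = deriv (deriv (deriv p)) := by
    rw [show (3:ℕ) = 2 + 1 from rfl, iteratedDeriv_succ, show (2:ℕ) = 1+1 from rfl,
      iteratedDeriv_succ, iteratedDeriv_one]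
  set qc : ℝ → ℂ := fun x => ((deriv p x : ℝ) : ℂ) with hqc_def
  set q2c : ℝ → ℂ := fun x => ((deriv (deriv p) x : ℝ) : ℂ) with hq2c_def
  set q3c : ℝ → ℂ := fun x => ((deriv (deriv (deriv p)) x : ℝ) : ℂ) with hq3c_def
  have hqc_smooth : ContDiff ℝ ∞ qc := Complex.ofRealCLM.contDiff.comp hp1
  have hq2c_smooth : ContDiff ℝ ∞ q2c := Complex.ofRealCLM.contDiff.comp hp2
  have hqc_cont : Continuous qc := hqc_smooth.continuous
  have hq2c_cont : Continuous q2c := hq2c_smooth.continuous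
  have hq3c_cont : Continuous q3c := Complex.continuous_ofReal.comp hc3
  have hqc_per : Function.Periodic qc (2*Real.pi) := fun x => congrArg Complex.ofReal (hq1 x)
  have hq2c_per : Function.Periodic q2c (2*Real.pi) := fun x => congrArg Complex.ofReal (hq2 x)
  have hdqc : deriv qc = q2c := funext fun x =>
    ((hp1.differentiable (by simp) x).hasDerivAt.ofReal_comp).deriv
  have hdq2c : deriv q2c = q3c := funext fun x =>
    ((hp2.differentiable (by simp) x).hasDerivAt.ofReal_comp).deriv
  set c : ℤ → ℂ := fourierCoeff (AddCircle.liftIco (2*Real.pi) 0 qc) with hc_def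
  have hcoef2 : ∀ n : ℤ, fourierCoeff (AddCircle.liftIco (2*Real.pi) 0 q2c) n
      = (Complex.I * n) * c n := by
    intro n
    have h := wirt_coeff_deriv qc hqc_smooth hqc_per n
    rwa [hdqc] at h
  have hcoef3 : ∀ n : ℤ, fourierCoeff (AddCircle.liftIco (2*Real.pi) 0 q3c) n
      = (Complex.I * n) * ((Complex.I * n) * c n) := by
    intro n
    have h := wirt_coeff_deriv q2c hq2c_smooth hq2c_per n
    rw [hdq2c, hcoef2 n] at h
    exact h
  have hc0 : c 0 = 0 := by
    rw [hc_def, wirt_coeff_eq]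
    have h1 : (∫ x in (0:ℝ)..(2*Real.pi),
        (fourier (-(0:ℤ)) (x : AddCircle (2*Real.pi)) : ℂ) * qc x)
        = ((p (2*Real.pi) - p 0 : ℝ) : ℂ) := by
      rw [intervalIntegral.integral_congr
        (fun x _ => by simp : Set.EqOn (fun x : ℝ =>
          (fourier (-(0:ℤ)) (x : AddCircle (2*Real.pi)) : ℂ) * qc x) (fun x => qc x) _)]
      rw [hqc_def]
      rw [intervalIntegral.integral_ofReal]
      rw [intervalIntegral.integral_deriv_eq_sub
        (fun x _ => (hp0.differentiable (by simp) x)) (hc1.intervalIntegrable _ _)]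
    rw [h1]
    have h2 : p (2*Real.pi) = p 0 := by simpa using hper 0
    simp [h2]
  have S1 := wirt_parseval qc hqc_cont hqc_per
  have S2 := wirt_parseval q2c hq2c_cont hq2c_per
  rw [intervalIntegral.integral_congr
      (fun x _ => by simp [hqc_def, _root_.sq_abs] : Set.EqOn (fun x : ℝ => ‖qc x‖^2)
        (fun x => deriv p x ^ 2) _)] at S1
  rw [intervalIntegral.integral_congr
      (fun x _ => by simp [hq2c_def, _root_.sq_abs] : Set.EqOn (fun x : ℝ => ‖q2c x‖^2)
        (fun x => deriv (deriv p) x ^ 2) _)] at S2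
  have hS2 : HasSum (fun n : ℤ => (n:ℝ)^2 * ‖c n‖^2)
      ((1 / (2*Real.pi)) * ∫ x in (0:ℝ)..(2*Real.pi), deriv (deriv p) x ^ 2) := by
    have hfun : (fun n : ℤ => ‖fourierCoeff (AddCircle.liftIco (2*Real.pi) 0 q2c) n‖^2)
        = fun n : ℤ => (n:ℝ)^2 * ‖c n‖^2 := by
      funext n
      rw [hcoef2 n]
      simp [norm_mul, mul_pow, _root_.sq_abs]
      try ring
    rwa [hfun] at S2
  have hts : HasSum (fun n : ℤ => ((n:ℝ)^2 - 1) * ‖c n‖^2)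
      ((1 / (2*Real.pi)) * (∫ x in (0:ℝ)..(2*Real.pi), deriv (deriv p) x ^ 2)
        - (1 / (2*Real.pi)) * ∫ x in (0:ℝ)..(2*Real.pi), deriv p x ^ 2) := by
    have h := hS2.sub S1
    have heq2 : (fun n : ℤ => (n:ℝ)^2 * ‖c n‖^2 - ‖c n‖^2)
        = fun n : ℤ => ((n:ℝ)^2 - 1) * ‖c n‖^2 := by
      funext n; ring
    rwa [heq2] at h
  have hnn : ∀ n : ℤ, 0 ≤ ((n:ℝ)^2 - 1) * ‖c n‖^2 := by
    intro n
    rcases eq_or_ne n 0 with rfl | hn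
    · simp [hc0]
    · have h1 : (1:ℤ) ≤ n^2 := by
        rcases lt_or_gt_of_ne hn with h | h <;> nlinarith
      have h1' : (1:ℝ) ≤ (n:ℝ)^2 := by exact_mod_cast h1
      exact mul_nonneg (by linarith) (sq_nonneg _)
  have hAsub : (∫ θ in (0:ℝ)..(2 * Real.pi), (deriv p θ ^ 2 - deriv (deriv p) θ ^ 2))
      = (∫ x in (0:ℝ)..(2*Real.pi), deriv p x ^ 2)
        - ∫ x in (0:ℝ)..(2*Real.pi), deriv (deriv p) x ^ 2 :=
    intervalIntegral.integral_sub ((hc1.pow 2).intervalIntegrable _ _)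
      ((hc2.pow 2).intervalIntegrable _ _)
  have htsum_nonneg : 0 ≤ (1 / (2*Real.pi)) * (∫ x in (0:ℝ)..(2*Real.pi), deriv (deriv p) x ^ 2)
      - (1 / (2*Real.pi)) * ∫ x in (0:ℝ)..(2*Real.pi), deriv p x ^ 2 := by
    rw [← hts.tsum_eq]
    exact tsum_nonneg hnn
  have hpi_pos := Real.two_pi_pos
  have hineq : (∫ x in (0:ℝ)..(2*Real.pi), deriv p x ^ 2)
      ≤ ∫ x in (0:ℝ)..(2*Real.pi), deriv (deriv p) x ^ 2 := by
    have h2 : 0 < 1 / (2*Real.pi) := by positivity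
    nlinarith [htsum_nonneg]
  refine ⟨by rw [hAsub]; linarith, ?_, ?_⟩
  · -- equality implies ∀ θ, deriv p + iteratedDeriv 3 p = 0
    intro heq
    have hA0 : (∫ x in (0:ℝ)..(2*Real.pi), deriv p x ^ 2)
        = ∫ x in (0:ℝ)..(2*Real.pi), deriv (deriv p) x ^ 2 := by
      rw [hAsub] at heq; linarith
    have hzs : ((1 / (2*Real.pi)) * (∫ x in (0:ℝ)..(2*Real.pi), deriv (deriv p) x ^ 2)
        - (1 / (2*Real.pi)) * ∫ x in (0:ℝ)..(2*Real.pi), deriv p x ^ 2) = 0 := by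
      rw [hA0]; ring
    have hterm : ∀ n : ℤ, ((n:ℝ)^2 - 1) * ‖c n‖^2 = 0 := by
      intro n
      have hle := Summable.le_tsum hts.summable n (fun j _ => hnn j)
      rw [hts.tsum_eq, hzs] at hle
      exact le_antisymm hle (hnn n)
    have hcvan : ∀ n : ℤ, n ≠ 1 → n ≠ -1 → c n = 0 := by
      intro n h1 h1'
      rcases eq_or_ne n 0 with rfl | hn0
      · exact hc0
      have h2 : 2 ≤ n ∨ n ≤ -2 := by omega
      have h4 : (4:ℝ) ≤ (n:ℝ)^2 := by
        have h5 : (4:ℤ) ≤ n^2 := by rcases h2 with h | h <;> nlinarith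
        exact_mod_cast h5
      have hne : ((n:ℝ)^2 - 1) ≠ 0 := by nlinarith
      have h6 := hterm n
      have h5 : ‖c n‖^2 = 0 := by
        rcases mul_eq_zero.mp h6 with h | h
        · exact absurd h hne
        · exact h
      have h7 : ‖c n‖ = 0 := by
        nlinarith [norm_nonneg (c n)]
      exact norm_eq_zero.mp h7
    set gc : ℝ → ℂ := fun x => ((deriv p x + deriv (deriv (deriv p)) x : ℝ) : ℂ) with hgc_def
    have hgc_cont : Continuous gc := Complex.continuous_ofReal.comp (hc1.add hc3)
    have hgr_per : Function.Periodic (fun x => deriv p x + deriv (deriv (deriv p)) x)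
        (2*Real.pi) := hq1.add hq3
    have hgc_per : Function.Periodic gc (2*Real.pi) := fun x => congrArg Complex.ofReal (hgr_per x)
    have hcoefg : ∀ n : ℤ, fourierCoeff (AddCircle.liftIco (2*Real.pi) 0 gc) n
        = (1 + (Complex.I * n) * (Complex.I * n)) * c n := by
      intro n
      rw [wirt_coeff_eq]
      have hsplit : (∫ x in (0:ℝ)..(2*Real.pi),
            (fourier (-n) (x : AddCircle (2*Real.pi)) : ℂ) * gc x)
          = (∫ x in (0:ℝ)..(2*Real.pi),
              (fourier (-n) (x : AddCircle (2*Real.pi)) : ℂ) * qc x)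
            + ∫ x in (0:ℝ)..(2*Real.pi),
                (fourier (-n) (x : AddCircle (2*Real.pi)) : ℂ) * q3c x := by
        have hfc : Continuous fun x : ℝ => (fourier (-n) (x : AddCircle (2*Real.pi)) : ℂ) :=
          (map_continuous (fourier (-n))).comp (AddCircle.continuous_mk' _)
        rw [← intervalIntegral.integral_add
          (f := fun x => (fourier (-n) (x : AddCircle (2*Real.pi)) : ℂ) * qc x)
          (g := fun x => (fourier (-n) (x : AddCircle (2*Real.pi)) : ℂ) * q3c x)
          ((hfc.mul hqc_cont).intervalIntegrable _ _)
          ((hfc.mul hq3c_cont).intervalIntegrable _ _)]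
        refine intervalIntegral.integral_congr fun x _ => ?_
        simp only [hgc_def, hqc_def, hq3c_def]
        push_cast
        ring
      rw [hsplit, smul_add, ← wirt_coeff_eq, ← wirt_coeff_eq, hcoef3 n, ← hc_def]
      ring
    have hgcoef0 : ∀ n : ℤ, fourierCoeff (AddCircle.liftIco (2*Real.pi) 0 gc) n = 0 := by
      intro n
      rw [hcoefg n]
      by_cases h1 : n = 1
      · subst h1
        have hz : (1 + Complex.I * ((1:ℤ):ℂ) * (Complex.I * ((1:ℤ):ℂ))) = 0 := by
          push_cast
          simp [Complex.I_mul_I]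
        rw [hz, zero_mul]
      · by_cases h2 : n = -1
        · subst h2
          have hz : (1 + Complex.I * ((-1:ℤ):ℂ) * (Complex.I * ((-1:ℤ):ℂ))) = 0 := by
            push_cast
            ring_nf
            simp [Complex.I_sq]
          rw [hz, zero_mul]
        · rw [hcvan n h1 h2, mul_zero]
    set G : C(AddCircle (2*Real.pi), ℂ) :=
      ⟨AddCircle.liftIco (2*Real.pi) 0 gc,
        AddCircle.liftIco_continuous (by simpa using (hgc_per 0).symm)
          hgc_cont.continuousOn⟩ with hG_def
    have hrepr : fourierBasis.repr (ContinuousMap.toLp (E := ℂ) 2 haarAddCircle ℂ G) = 0 := by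
      apply lp.ext
      funext i
      rw [lp.coeFn_zero, Pi.zero_apply, fourierBasis_repr, fourierCoeff_toLp]
      exact hgcoef0 i
    have hFzero : ContinuousMap.toLp (E := ℂ) 2 haarAddCircle ℂ G = 0 := by
      have h := fourierBasis.repr.map_eq_zero_iff
        (x := ContinuousMap.toLp (E := ℂ) 2 haarAddCircle ℂ G)
      exact h.mp hrepr
    have haeq : (⇑G : AddCircle (2*Real.pi) → ℂ) =ᵐ[haarAddCircle] (fun _ => 0) := by
      have h1 := ContinuousMap.coeFn_toLp (p := 2) haarAddCircle (𝕜 := ℂ) G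
      rw [hFzero] at h1
      have h2 := MeasureTheory.Lp.coeFn_zero ℂ 2 (haarAddCircle (T := 2*Real.pi))
      exact (h1.symm.trans h2).trans (by rfl)
    have hGzero : (⇑G : AddCircle (2*Real.pi) → ℂ) = fun _ => 0 :=
      (Continuous.ae_eq_iff_eq haarAddCircle G.continuous continuous_const).mp haeq
    have hgc0 : ∀ x ∈ Set.Ico (0:ℝ) (2*Real.pi), gc x = 0 := by
      intro x hx
      have h1 := congrFun hGzero ((x:ℝ) : AddCircle (2*Real.pi))
      have h2 : AddCircle.liftIco (2*Real.pi) 0 gc ((x:ℝ) : AddCircle (2*Real.pi)) = gc x :=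
        AddCircle.liftIco_coe_apply (by simpa using hx)
      have h2' : G ((x:ℝ) : AddCircle (2*Real.pi)) = gc x := h2
      rw [h2'] at h1
      exact h1
    intro θ
    rw [hiter]
    obtain ⟨y, hy, hEq⟩ := hgr_per.exists_mem_Ico₀ Real.two_pi_pos θ
    rw [hEq]
    have h8 := hgc0 y hy
    have h9 : ((deriv p y + deriv (deriv (deriv p)) y : ℝ) : ℂ) = 0 := h8
    exact_mod_cast h9
  · -- reverse direction
    intro h
    have h3 : ∀ θ, deriv (deriv (deriv p)) θ = - deriv p θ := by
      intro θ
      have h9 := h θ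
      rw [hiter] at h9
      linarith
    have hu : ∀ x ∈ Set.uIcc (0:ℝ) (2*Real.pi),
        HasDerivAt (deriv p) (deriv (deriv p) x) x :=
      fun x _ => (hp1.differentiable (by simp) x).hasDerivAt
    have hv : ∀ x ∈ Set.uIcc (0:ℝ) (2*Real.pi),
        HasDerivAt (deriv (deriv p)) (deriv (deriv (deriv p)) x) x :=
      fun x _ => (hp2.differentiable (by simp) x).hasDerivAt
    have key := intervalIntegral.integral_deriv_mul_eq_sub hu hv
      (hc2.intervalIntegrable _ _) (hc3.intervalIntegrable _ _)
    have hb : deriv p (2*Real.pi) * deriv (deriv p) (2*Real.pi)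
        - deriv p 0 * deriv (deriv p) 0 = 0 := by
      have e1 : deriv p (2*Real.pi) = deriv p 0 := by simpa using hq1 0
      have e2 : deriv (deriv p) (2*Real.pi) = deriv (deriv p) 0 := by simpa using hq2 0
      rw [e1, e2, sub_self]
    rw [hb] at key
    have hflip : (∫ θ in (0:ℝ)..(2 * Real.pi), (deriv p θ ^ 2 - deriv (deriv p) θ ^ 2))
        = - ∫ x in (0:ℝ)..(2*Real.pi),
            (deriv (deriv p) x * deriv (deriv p) x + deriv p x * deriv (deriv (deriv p)) x) := by
      rw [← intervalIntegral.integral_neg]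
      refine intervalIntegral.integral_congr fun x _ => ?_
      rw [h3 x]
      ring
    rw [hflip, key, neg_zero, mul_zero]

end MainProof
end

section
/- Let C be a smooth regular plane curve with arc-length parameterization f, nonvanishing curvature, and radius of curvature ρ. Let γ(s) = f(s) + (−ρ(s)ρ'(s)·t(s) + ρ(s)·n(s))/(1 + ρ'(s)²) parameterize the singular evolutoids set. Then γ'(s) = 0 if and only if ρ''(s) = 0. -/
open Real

noncomputable def sesParam (f t n : ℝ → ℝ × ℝ) (ρ : ℝ → ℝ) : ℝ → ℝ × ℝ :=
  fun s => f s + (1 + deriv ρ s ^ 2)⁻¹ •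
    ((-(ρ s * deriv ρ s)) • t s + ρ s • n s)

theorem stmt8 (f t n : ℝ → ℝ × ℝ) (ρ : ℝ → ℝ)
    (hf : ContDiff ℝ (⊤ : ℕ∞) f) (hρ : ContDiff ℝ (⊤ : ℕ∞) ρ)
    (hρne : ∀ s, ρ s ≠ 0)
    (ht : ∀ s, deriv f s = t s)
    (hunit : ∀ s, (t s).1 ^ 2 + (t s).2 ^ 2 = 1)
    (hn : ∀ s, n s = (-(t s).2, (t s).1))
    (hFr1 : ∀ s, deriv t s = (ρ s)⁻¹ • n s)
    (hFr2 : ∀ s, deriv n s = -(ρ s)⁻¹ • t s) :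
    ∀ s, deriv (sesParam f t n ρ) s = 0 ↔ deriv (deriv ρ) s = 0 := by
  have hf' : ContDiff ℝ (⊤:ℕ∞) f := hf.of_le (by simp)
  have hρ' : ContDiff ℝ (⊤:ℕ∞) ρ := hρ.of_le (by simp)
  have ht_cd : ContDiff ℝ (⊤:ℕ∞) t := by
    have := (contDiff_infty_iff_deriv.mp hf').2
    have hteq : t = deriv f := funext fun s => (ht s).symm
    rwa [hteq]
  have hn_cd : ContDiff ℝ (⊤:ℕ∞) n := by
    have hneq : n = fun s => (-(t s).2, (t s).1) := funext hn
    rw [hneq]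
    exact ((contDiff_snd.comp ht_cd).neg).prodMk (contDiff_fst.comp ht_cd)
  have hρ'_cd : ContDiff ℝ (⊤:ℕ∞) (deriv ρ) := (contDiff_infty_iff_deriv.mp hρ').2
  intro s
  set r := ρ s with hr
  set r' := deriv ρ s with hr'
  set r'' := deriv (deriv ρ) s with hr''
  have hdf : HasDerivAt f (t s) s := ht s ▸ (hf'.differentiable (by simp) s).hasDerivAt
  have hdt : HasDerivAt t ((ρ s)⁻¹ • n s) s :=
    hFr1 s ▸ (ht_cd.differentiable (by simp) s).hasDerivAt
  have hdn : HasDerivAt n (-(ρ s)⁻¹ • t s) s :=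
    hFr2 s ▸ (hn_cd.differentiable (by simp) s).hasDerivAt
  have hdρ : HasDerivAt ρ r' s := (hρ'.differentiable (by simp) s).hasDerivAt
  have hdρ' : HasDerivAt (deriv ρ) r'' s := (hρ'_cd.differentiable (by simp) s).hasDerivAt
  have hrne : r ≠ 0 := hρne s
  have hpos : (1 : ℝ) + r' ^ 2 ≠ 0 := by positivity
  have hs2 : HasDerivAt (fun s => 1 + deriv ρ s ^ 2) (↑2 * deriv ρ s ^ 1 * r'') s :=
    (hdρ'.pow 2).const_add 1
  have hinv : HasDerivAt (fun s => (1 + deriv ρ s ^ 2)⁻¹)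
      (-(↑2 * deriv ρ s ^ 1 * r'') / (1 + deriv ρ s ^ 2) ^ 2) s := hs2.inv hpos
  have h1 : HasDerivAt (fun s => ρ s * deriv ρ s) (r' * r' + r * r'') s := by
    have := hdρ.mul hdρ'
    exact this
  have hv : HasDerivAt (fun s => (-(ρ s * deriv ρ s)) • t s + ρ s • n s)
      (((-(ρ s * deriv ρ s)) • ((ρ s)⁻¹ • n s) + (-(r' * r' + r * r'')) • t s) +
        (ρ s • (-(ρ s)⁻¹ • t s) + r' • n s)) s :=
    ((h1.neg).smul hdt).add (hdρ.smul hdn)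
  have hγ := hdf.add (hinv.smul hv)
  have hd : deriv (sesParam f t n ρ) s =
      t s + ((1 + deriv ρ s ^ 2)⁻¹ •
        (((-(ρ s * deriv ρ s)) • ((ρ s)⁻¹ • n s) + (-(r' * r' + r * r'')) • t s) +
          (ρ s • (-(ρ s)⁻¹ • t s) + r' • n s)) +
        (-(↑2 * deriv ρ s ^ 1 * r'') / (1 + deriv ρ s ^ 2) ^ 2) •
          ((-(ρ s * deriv ρ s)) • t s + ρ s • n s)) := by
    exact hγ.deriv
  have hclosed : deriv (sesParam f t n ρ) s =
      (r * r'' / (1 + r' ^ 2) ^ 2) • ((r' ^ 2 - 1) • t s + (-(2 * r')) • n s) := by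
    rw [hd]
    apply Prod.ext <;>
      simp only [Prod.fst_add, Prod.snd_add, Prod.smul_fst, Prod.smul_snd, smul_eq_mul,
        ← hr, ← hr', pow_one] <;>
      field_simp [hrne] <;> ring
  rw [hclosed]
  constructor
  · intro h
    rcases smul_eq_zero.mp h with hc | hvz
    · have hdenom : ((1 : ℝ) + r' ^ 2) ^ 2 ≠ 0 := pow_ne_zero _ hpos
      have := (div_eq_zero_iff.mp hc).resolve_right hdenom
      rcases mul_eq_zero.mp this with h0 | h0
      · exact absurd h0 (hρne s)
      · exact h0
    · exfalso
      have h1 := congrArg Prod.fst hvz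
      have h2 := congrArg Prod.snd hvz
      simp only [Prod.fst_add, Prod.snd_add, Prod.smul_fst, Prod.smul_snd, smul_eq_mul,
        hn s, Prod.fst_zero, Prod.snd_zero] at h1 h2
      have hu := hunit s
      nlinarith [sq_nonneg ((t s).1), sq_nonneg ((t s).2), sq_nonneg r',
        sq_nonneg ((r' ^ 2 - 1) * (t s).1), sq_nonneg ((r' ^ 2 - 1) * (t s).2)]
  · intro h
    rw [h]
    simp
end

section
/- Let C be a smooth regular plane curve with arc-length parameterization f, nonvanishing curvature, radius of curvature ρ, and SES parameterization γ(s) = f(s) + (−ρρ'·t + ρ·n)/(1+ρ'²). At a regular point of γ (that is, where γ'(s) ≠ 0), the determinant det(γ'(s), γ''(s)) vanishes if and only if 1 + ρ'(s)² + 2ρ(s)ρ''(s) = 0. In particular, γ has an inflexion or undulation point at γ(s) if and only if 1 + ρ'(s)² + 2ρ(s)ρ''(s) = 0. -/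
open Real

def det2 (u v : ℝ × ℝ) : ℝ := u.1 * v.2 - u.2 * v.1

lemma det2_frame (x : ℝ × ℝ) (h : x.1 ^ 2 + x.2 ^ 2 = 1) (a b c d : ℝ) :
    det2 (a • x + b • ((-x.2, x.1) : ℝ × ℝ)) (c • x + d • ((-x.2, x.1) : ℝ × ℝ))
      = a * d - b * c := by
  simp only [det2, Prod.fst_add, Prod.snd_add, Prod.smul_fst, Prod.smul_snd, smul_eq_mul]
  linear_combination (a * d - b * c) * h

theorem stmt9 (f t n : ℝ → ℝ × ℝ) (ρ : ℝ → ℝ)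
    (hf : ContDiff ℝ (⊤ : ℕ∞) f) (hρ : ContDiff ℝ (⊤ : ℕ∞) ρ)
    (hρne : ∀ s, ρ s ≠ 0)
    (ht : ∀ s, deriv f s = t s)
    (hunit : ∀ s, (t s).1 ^ 2 + (t s).2 ^ 2 = 1)
    (hn : ∀ s, n s = (-(t s).2, (t s).1))
    (hFr1 : ∀ s, deriv t s = (ρ s)⁻¹ • n s)
    (hFr2 : ∀ s, deriv n s = -(ρ s)⁻¹ • t s)
    (s : ℝ) (hreg : deriv (sesParam f t n ρ) s ≠ 0) :
    det2 (deriv (sesParam f t n ρ) s)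
        (iteratedDeriv 2 (sesParam f t n ρ) s) = 0
      ↔ 1 + deriv ρ s ^ 2 + 2 * ρ s * deriv (deriv ρ) s = 0 := by
  -- smoothness facts
  have hf' : ContDiff ℝ (⊤ : ℕ∞) f := hf.of_le (by simp)
  have hρ' : ContDiff ℝ (⊤ : ℕ∞) ρ := hρ.of_le (by simp)
  have htf : t = deriv f := funext fun x => (ht x).symm
  have hct : ContDiff ℝ (⊤ : ℕ∞) t := htf ▸ (contDiff_infty_iff_deriv.mp hf').2
  have hcu : ContDiff ℝ (⊤ : ℕ∞) (deriv ρ) := (contDiff_infty_iff_deriv.mp hρ').2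
  have hcr : ContDiff ℝ (⊤ : ℕ∞) (deriv (deriv ρ)) := (contDiff_infty_iff_deriv.mp hcu).2
  have hcn : ContDiff ℝ (⊤ : ℕ∞) n := by
    have h : n = fun x => ((-(t x).2, (t x).1) : ℝ × ℝ) := funext hn
    rw [h]
    exact ContDiff.prodMk ((contDiff_snd.comp hct).neg) (contDiff_fst.comp hct)
  -- abbreviations
  set U := deriv ρ with hU
  set R := deriv U with hR
  have hw : ∀ x : ℝ, (1 + U x ^ 2) ≠ 0 := fun x => by positivity
  -- pointwise derivatives
  have hdt : ∀ x, HasDerivAt t ((ρ x)⁻¹ • n x) x := fun x => by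
    have := (hct.differentiable (by simp) x).hasDerivAt
    rwa [hFr1 x] at this
  have hdn : ∀ x, HasDerivAt n (-(ρ x)⁻¹ • t x) x := fun x => by
    have := (hcn.differentiable (by simp) x).hasDerivAt
    rwa [hFr2 x] at this
  have hdf : ∀ x, HasDerivAt f (t x) x := fun x => by
    have := (hf'.differentiable (by simp) x).hasDerivAt
    rwa [ht x] at this
  have hdρ : ∀ x, HasDerivAt ρ (U x) x := fun x =>
    (hρ'.differentiable (by simp) x).hasDerivAt
  have hdU : ∀ x, HasDerivAt U (R x) x := fun x =>
    (hcu.differentiable (by simp) x).hasDerivAt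
  have hdR : ∀ x, HasDerivAt R (deriv R x) x := fun x =>
    (hcr.differentiable (by simp) x).hasDerivAt
  -- the first derivative of γ
  have hγ' : ∀ x, HasDerivAt (sesParam f t n ρ)
      ((ρ x * R x / (1 + U x ^ 2) ^ 2) •
        ((U x ^ 2 - 1) • t x + (-(2 * U x)) • n x)) x := by
    intro x
    have h1 : HasDerivAt (fun y => -(ρ y * U y)) (-(U x * U x + ρ x * R x)) x :=
      ((hdρ x).mul (hdU x)).neg
    have h2 := h1.smul (hdt x)
    have h3 := (hdρ x).smul (hdn x)
    have h4 := h2.add h3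
    have hwD : HasDerivAt (fun y => (1 + U y ^ 2)) (2 * U x ^ 1 * R x) x :=
      ((hdU x).pow 2).const_add 1
    have h5 : HasDerivAt (fun y => (1 + U y ^ 2)⁻¹)
        (-(2 * U x ^ 1 * R x) / (1 + U x ^ 2) ^ 2) x := hwD.inv (hw x)
    have h6 := h5.smul h4
    have h7 := (hdf x).add h6
    have h8 : HasDerivAt (sesParam f t n ρ) _ x := h7
    convert h8 using 1
    have hx1 := hw x
    have hx2 := hρne x
    simp only [Pi.add_apply, Pi.smul_apply']
    rw [hn x]
    refine Prod.ext ?_ ?_ <;>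
      simp only [Prod.fst_add, Prod.snd_add, Prod.smul_fst, Prod.smul_snd, smul_eq_mul,
        Prod.fst_neg, Prod.snd_neg, neg_mul, mul_neg, pow_one] <;>
      field_simp <;> ring
  have hderivγ : deriv (sesParam f t n ρ) = fun x =>
      (ρ x * R x / (1 + U x ^ 2) ^ 2) •
        ((U x ^ 2 - 1) • t x + (-(2 * U x)) • n x) := funext fun x => (hγ' x).deriv
  -- φ is differentiable at s
  have hφd : HasDerivAt (fun x => ρ x * R x / (1 + U x ^ 2) ^ 2)
      (deriv (fun x => ρ x * R x / (1 + U x ^ 2) ^ 2) s) s := by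
    have hnum := (hdρ s).mul (hdR s)
    have hden : HasDerivAt (fun y => ((1 + U y ^ 2) ^ 2 : ℝ))
        (2 * (1 + U s ^ 2) ^ 1 * (2 * U s ^ 1 * R s)) s :=
      (((hdU s).pow 2).const_add 1).pow 2
    exact (hnum.div hden (pow_ne_zero 2 (hw s))).deriv ▸
      (hnum.div hden (pow_ne_zero 2 (hw s)))
  set Dφ := deriv (fun x => ρ x * R x / (1 + U x ^ 2) ^ 2) s with hDφ
  -- derivative of v
  have hvd : HasDerivAt (fun x => (U x ^ 2 - 1) • t x + (-(2 * U x)) • n x)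
      ((2 * U s * R s + 2 * U s * (ρ s)⁻¹) • t s +
        ((U s ^ 2 - 1) * (ρ s)⁻¹ - 2 * R s) • n s) s := by
    have h1 : HasDerivAt (fun y => (U y ^ 2 - 1 : ℝ)) (2 * U s ^ 1 * R s) s :=
      ((hdU s).pow 2).sub_const 1
    have h2 := h1.smul (hdt s)
    have h3 : HasDerivAt (fun y => (-(2 * U y) : ℝ)) (-(2 * R s)) s :=
      ((hdU s).const_mul 2).neg
    have h4 := h3.smul (hdn s)
    refine HasDerivAt.congr_deriv (h2.add h4) ?_
    rw [hn s]
    refine Prod.ext ?_ ?_ <;>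
      simp only [Prod.fst_add, Prod.snd_add, Prod.smul_fst, Prod.smul_snd, smul_eq_mul,
        Prod.fst_neg, Prod.snd_neg, neg_mul, mul_neg, pow_one] <;>
      field_simp <;> ring
  -- second derivative
  have hγ'' : iteratedDeriv 2 (sesParam f t n ρ) s =
      (ρ s * R s / (1 + U s ^ 2) ^ 2) •
        ((2 * U s * R s + 2 * U s * (ρ s)⁻¹) • t s +
          ((U s ^ 2 - 1) * (ρ s)⁻¹ - 2 * R s) • n s) +
      Dφ • ((U s ^ 2 - 1) • t s + (-(2 * U s)) • n s) := by
    rw [show (2 : ℕ) = 1 + 1 from rfl, iteratedDeriv_succ, iteratedDeriv_one, hderivγ]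
    exact (hφd.smul hvd).deriv
  -- φ s ≠ 0
  have hφne : ρ s * R s / (1 + U s ^ 2) ^ 2 ≠ 0 := by
    intro h
    apply hreg
    rw [hderivγ]
    simp [h]
  -- rewrite everything in the t/n frame and compute
  set φ := ρ s * R s / (1 + U s ^ 2) ^ 2 with hφ
  have e1 : deriv (sesParam f t n ρ) s =
      (φ * (U s ^ 2 - 1)) • t s + (φ * (-(2 * U s))) • n s := by
    rw [hderivγ]; module
  have e2 : iteratedDeriv 2 (sesParam f t n ρ) s =
      (φ * (2 * U s * R s + 2 * U s * (ρ s)⁻¹) + Dφ * (U s ^ 2 - 1)) • t s +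
      (φ * ((U s ^ 2 - 1) * (ρ s)⁻¹ - 2 * R s) + Dφ * (-(2 * U s))) • n s := by
    rw [hγ'']; module
  rw [e1, e2, hn s, det2_frame (t s) (hunit s)]
  have key : (φ * (U s ^ 2 - 1)) *
      (φ * ((U s ^ 2 - 1) * (ρ s)⁻¹ - 2 * R s) + Dφ * (-(2 * U s))) -
      (φ * (-(2 * U s))) *
      (φ * (2 * U s * R s + 2 * U s * (ρ s)⁻¹) + Dφ * (U s ^ 2 - 1)) =
      (φ ^ 2 * (1 + U s ^ 2) / ρ s) * (1 + U s ^ 2 + 2 * ρ s * R s) := by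
    linear_combination (-(φ ^ 2 * 2 * R s * (1 + U s ^ 2))) * mul_inv_cancel₀ (hρne s)
  rw [key, mul_eq_zero]
  have hne : φ ^ 2 * (1 + U s ^ 2) / ρ s ≠ 0 :=
    div_ne_zero (mul_ne_zero (pow_ne_zero 2 hφne) (hw s)) (hρne s)
  simp [hne]
end

section
/- Let C be a hedgehog with support function p, radius of curvature ρ = p + p'', parameterization f(θ), tangent t(θ) = (−sin θ, cos θ), and for (α, θ) ∈ [0,π] × S¹ set F(α,θ) = (α, f(θ) + ρ(θ) sin α · t(θ+α)) ∈ ℝ³ and ν(α,θ) = (−ρ(θ) sin α, n(θ+α))/√(1 + ρ²(θ) sin²α) with n(θ) = (−cos θ, −sin θ). Then ν is a unit vector orthogonal to both ∂F/∂α and ∂F/∂θ at every point, i.e., (F, ν) defines a (Legendrian) front. -/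
open Real

/-- The extended evolutoids front F(α,θ) = (α, f(θ) + ρ(θ) sin α · t(θ+α)). -/
noncomputable def front (p ρ : ℝ → ℝ) (α θ : ℝ) : ℝ × ℝ × ℝ :=
  (α, hedgehogParam p θ + (ρ θ * Real.sin α) • tangentVec (θ + α))

/-- The unit normal ν(α,θ) of the extended evolutoids front. -/
noncomputable def frontNormal (ρ : ℝ → ℝ) (α θ : ℝ) : ℝ × ℝ × ℝ :=
  (Real.sqrt (1 + ρ θ ^ 2 * Real.sin α ^ 2))⁻¹ •
    ((-(ρ θ * Real.sin α), normalVec (θ + α)) : ℝ × ℝ × ℝ)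

def dot3 (u v : ℝ × ℝ × ℝ) : ℝ :=
  u.1 * v.1 + u.2.1 * v.2.1 + u.2.2 * v.2.2

def cross3 (u v : ℝ × ℝ × ℝ) : ℝ × ℝ × ℝ :=
  (u.2.1 * v.2.2 - u.2.2 * v.2.1,
   u.2.2 * v.1 - u.1 * v.2.2,
   u.1 * v.2.1 - u.2.1 * v.1)

def det3 (u v w : ℝ × ℝ × ℝ) : ℝ := dot3 (cross3 u v) w

noncomputable def norm3 (u : ℝ × ℝ × ℝ) : ℝ := Real.sqrt (dot3 u u)

lemma dot3_smul_left (c : ℝ) (u v : ℝ × ℝ × ℝ) : dot3 (c • u) v = c * dot3 u v := by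
  obtain ⟨u1, u2, u3⟩ := u
  obtain ⟨v1, v2, v3⟩ := v
  simp only [dot3, Prod.smul_mk, smul_eq_mul]
  ring

lemma dot3_smul_right (c : ℝ) (u v : ℝ × ℝ × ℝ) : dot3 u (c • v) = c * dot3 u v := by
  obtain ⟨u1, u2, u3⟩ := u
  obtain ⟨v1, v2, v3⟩ := v
  simp only [dot3, Prod.smul_mk, smul_eq_mul]
  ring

theorem stmt11 (p ρ : ℝ → ℝ) (hp : ContDiff ℝ (⊤ : ℕ∞) p)
    (hper : Function.Periodic p (2 * Real.pi))
    (hρ : ∀ θ, ρ θ = p θ + deriv (deriv p) θ) :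
    ∀ α ∈ Set.Icc (0:ℝ) Real.pi, ∀ θ : ℝ,
      dot3 (frontNormal ρ α θ) (frontNormal ρ α θ) = 1
      ∧ dot3 (frontNormal ρ α θ) (deriv (fun a => front p ρ a θ) α) = 0
      ∧ dot3 (frontNormal ρ α θ) (deriv (fun b => front p ρ α b) θ) = 0 := by
  have hρe : ρ = fun x => p x + deriv (deriv p) x := funext hρ
  subst hρe
  intro α _ θ
  have hp0 : ContDiff ℝ (⊤:ℕ∞) p := hp.of_le (by simp)
  have hp1 : ContDiff ℝ (⊤:ℕ∞) (deriv p) := (contDiff_infty_iff_deriv.mp hp0).2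
  have hp2 : ContDiff ℝ (⊤:ℕ∞) (deriv (deriv p)) := (contDiff_infty_iff_deriv.mp hp1).2
  have hdp : ∀ x, HasDerivAt p (deriv p x) x := fun x =>
    (hp0.differentiable (by simp) x).hasDerivAt
  have hdp1 : ∀ x, HasDerivAt (deriv p) (deriv (deriv p) x) x := fun x =>
    (hp1.differentiable (by simp) x).hasDerivAt
  have hdp2 : ∀ x, HasDerivAt (deriv (deriv p)) (deriv (deriv (deriv p)) x) x := fun x =>
    (hp2.differentiable (by simp) x).hasDerivAt
  set r : ℝ := p θ + deriv (deriv p) θ with hr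
  -- shifted trig derivatives, α-direction
  have hsA : HasDerivAt (fun a : ℝ => Real.sin (θ + a)) (Real.cos (θ + α)) α := by
    simpa [Function.comp_def] using (Real.hasDerivAt_sin (θ + α)).comp α ((hasDerivAt_const α θ).add (hasDerivAt_id α))
  have hcA : HasDerivAt (fun a : ℝ => Real.cos (θ + a)) (-Real.sin (θ + α)) α := by
    simpa [Function.comp_def] using (Real.hasDerivAt_cos (θ + α)).comp α ((hasDerivAt_const α θ).add (hasDerivAt_id α))
  -- shifted trig derivatives, θ-direction
  have hsB : HasDerivAt (fun b : ℝ => Real.sin (b + α)) (Real.cos (θ + α)) θ := by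
    simpa [Function.comp_def] using (Real.hasDerivAt_sin (θ + α)).comp θ ((hasDerivAt_id θ).add_const α)
  have hcB : HasDerivAt (fun b : ℝ => Real.cos (b + α)) (-Real.sin (θ + α)) θ := by
    simpa [Function.comp_def] using (Real.hasDerivAt_cos (θ + α)).comp θ ((hasDerivAt_id θ).add_const α)
  -- α-derivative of the front
  have hfA : (fun a => front p (fun x => p x + deriv (deriv p) x) a θ) =
      fun a => ((a : ℝ),
        ((p θ * Real.cos θ - deriv p θ * Real.sin θ + r * Real.sin a * (-Real.sin (θ + a)),
          p θ * Real.sin θ + deriv p θ * Real.cos θ + r * Real.sin a * Real.cos (θ + a)) : ℝ × ℝ)) := by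
    funext a
    simp [front, hedgehogParam, tangentVec, Prod.mk_add_mk, Prod.smul_mk, smul_eq_mul, hr]
  have hA1 : HasDerivAt (fun a : ℝ =>
      p θ * Real.cos θ - deriv p θ * Real.sin θ + r * Real.sin a * (-Real.sin (θ + a)))
      (r * Real.cos α * (-Real.sin (θ + α)) + r * Real.sin α * (-Real.cos (θ + α))) α := by
    have := (((Real.hasDerivAt_sin α).const_mul r).mul hsA.neg).const_add
      (p θ * Real.cos θ - deriv p θ * Real.sin θ)
    convert this using 1
    all_goals rfl
  have hA2 : HasDerivAt (fun a : ℝ =>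
      p θ * Real.sin θ + deriv p θ * Real.cos θ + r * Real.sin a * Real.cos (θ + a))
      (r * Real.cos α * Real.cos (θ + α) + r * Real.sin α * (-Real.sin (θ + α))) α := by
    have := (((Real.hasDerivAt_sin α).const_mul r).mul hcA).const_add
      (p θ * Real.sin θ + deriv p θ * Real.cos θ)
    convert this using 1
    all_goals rfl
  have hA : deriv (fun a => front p (fun x => p x + deriv (deriv p) x) a θ) α =
      (1, (r * Real.cos α * (-Real.sin (θ + α)) + r * Real.sin α * (-Real.cos (θ + α)),
           r * Real.cos α * Real.cos (θ + α) + r * Real.sin α * (-Real.sin (θ + α)))) := by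
    rw [hfA]
    exact ((hasDerivAt_id α).prodMk (hA1.prodMk hA2)).deriv
  -- θ-derivative of the front
  have hfB : (fun b => front p (fun x => p x + deriv (deriv p) x) α b) =
      fun b => ((α : ℝ),
        ((p b * Real.cos b - deriv p b * Real.sin b
            + (p b + deriv (deriv p) b) * Real.sin α * (-Real.sin (b + α)),
          p b * Real.sin b + deriv p b * Real.cos b
            + (p b + deriv (deriv p) b) * Real.sin α * Real.cos (b + α)) : ℝ × ℝ)) := by
    funext b
    simp [front, hedgehogParam, tangentVec, Prod.mk_add_mk, Prod.smul_mk, smul_eq_mul]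
  have hB1 : HasDerivAt (fun b : ℝ =>
      p b * Real.cos b - deriv p b * Real.sin b
        + (p b + deriv (deriv p) b) * Real.sin α * (-Real.sin (b + α)))
      ((deriv p θ * Real.cos θ + p θ * (-Real.sin θ))
        - (deriv (deriv p) θ * Real.sin θ + deriv p θ * Real.cos θ)
        + ((deriv p θ + deriv (deriv (deriv p)) θ) * Real.sin α * (-Real.sin (θ + α))
            + r * Real.sin α * (-Real.cos (θ + α)))) θ := by
    have h1 := (hdp θ).mul (Real.hasDerivAt_cos θ)
    have h2 := (hdp1 θ).mul (Real.hasDerivAt_sin θ)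
    have h3 := ((((hdp θ).add (hdp2 θ)).mul_const (Real.sin α)).mul hsB.neg)
    have := (h1.sub h2).add h3
    convert this using 1
    all_goals rfl
  have hB2 : HasDerivAt (fun b : ℝ =>
      p b * Real.sin b + deriv p b * Real.cos b
        + (p b + deriv (deriv p) b) * Real.sin α * Real.cos (b + α))
      ((deriv p θ * Real.sin θ + p θ * Real.cos θ)
        + (deriv (deriv p) θ * Real.cos θ + deriv p θ * (-Real.sin θ))
        + ((deriv p θ + deriv (deriv (deriv p)) θ) * Real.sin α * Real.cos (θ + α)
            + r * Real.sin α * (-Real.sin (θ + α)))) θ := by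
    have h1 := (hdp θ).mul (Real.hasDerivAt_sin θ)
    have h2 := (hdp1 θ).mul (Real.hasDerivAt_cos θ)
    have h3 := ((((hdp θ).add (hdp2 θ)).mul_const (Real.sin α)).mul hcB)
    have := (h1.add h2).add h3
    convert this using 1
    all_goals rfl
  have hB : deriv (fun b => front p (fun x => p x + deriv (deriv p) x) α b) θ =
      (0, ((deriv p θ * Real.cos θ + p θ * (-Real.sin θ))
        - (deriv (deriv p) θ * Real.sin θ + deriv p θ * Real.cos θ)
        + ((deriv p θ + deriv (deriv (deriv p)) θ) * Real.sin α * (-Real.sin (θ + α))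
            + r * Real.sin α * (-Real.cos (θ + α))),
        (deriv p θ * Real.sin θ + p θ * Real.cos θ)
        + (deriv (deriv p) θ * Real.cos θ + deriv p θ * (-Real.sin θ))
        + ((deriv p θ + deriv (deriv (deriv p)) θ) * Real.sin α * Real.cos (θ + α)
            + r * Real.sin α * (-Real.sin (θ + α))))) := by
    rw [hfB]
    exact ((hasDerivAt_const θ α).prodMk (hB1.prodMk hB2)).deriv
  have hs : (0:ℝ) < 1 + ((fun x => p x + deriv (deriv p) x) θ) ^ 2 * Real.sin α ^ 2 := by
    positivity
  have hss : Real.sqrt (1 + ((fun x => p x + deriv (deriv p) x) θ) ^ 2 * Real.sin α ^ 2)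
      * Real.sqrt (1 + ((fun x => p x + deriv (deriv p) x) θ) ^ 2 * Real.sin α ^ 2)
      = 1 + ((fun x => p x + deriv (deriv p) x) θ) ^ 2 * Real.sin α ^ 2 :=
    Real.mul_self_sqrt hs.le
  have hsne : Real.sqrt (1 + ((fun x => p x + deriv (deriv p) x) θ) ^ 2 * Real.sin α ^ 2) ≠ 0 :=
    ne_of_gt (Real.sqrt_pos.mpr hs)
  refine ⟨?_, ?_, ?_⟩
  · simp only [frontNormal, dot3_smul_left, dot3_smul_right]
    have hu : dot3 ((-((p θ + deriv (deriv p) θ) * Real.sin α), normalVec (θ + α)) : ℝ × ℝ × ℝ)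
        ((-((p θ + deriv (deriv p) θ) * Real.sin α), normalVec (θ + α)) : ℝ × ℝ × ℝ)
        = 1 + (p θ + deriv (deriv p) θ) ^ 2 * Real.sin α ^ 2 := by
      simp only [dot3, normalVec]
      linear_combination Real.sin_sq_add_cos_sq (θ + α)
    rw [hu]
    have h2 := Real.mul_self_sqrt hs.le
    field_simp
    exact (Real.sq_sqrt hs.le).symm
  · rw [hA]
    simp only [frontNormal, dot3_smul_left]
    simp only [dot3, normalVec, hr]
    linear_combination ((Real.sqrt (1 + (p θ + deriv (deriv p) θ) ^ 2 * Real.sin α ^ 2))⁻¹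
      * (p θ + deriv (deriv p) θ) * Real.sin α) * Real.sin_sq_add_cos_sq (θ + α)
  · rw [hB]
    simp only [frontNormal, dot3_smul_left]
    simp only [dot3, normalVec, hr, Real.sin_add, Real.cos_add]
    linear_combination ((Real.sqrt (1 + (p θ + deriv (deriv p) θ) ^ 2 * Real.sin α ^ 2))⁻¹
      * (p θ + deriv (deriv p) θ) * Real.sin α * (Real.sin θ ^ 2 + Real.cos θ ^ 2))
      * Real.sin_sq_add_cos_sq α
end

section
/- With F(α,θ) = (α, f(θ) + ρ(θ) sin α · t(θ+α)) as the extended evolutoids front of a hedgehog C with radius of curvature ρ, the signed area density is λ(α,θ) = (ρ(θ)cos α + ρ'(θ)sin α)·√(1 + ρ²(θ) sin²α); in particular F is singular at (α,θ) (i.e., ∂F/∂α and ∂F/∂θ are linearly dependent) if and only if ρ(θ)cos α + ρ'(θ)sin α = 0. -/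
open Real

theorem stmt12 (p ρ : ℝ → ℝ) (hp : ContDiff ℝ (⊤ : ℕ∞) p)
    (hper : Function.Periodic p (2 * Real.pi))
    (hρ : ∀ θ, ρ θ = p θ + deriv (deriv p) θ) :
    ∀ α θ : ℝ,
      dot3 (cross3 (deriv (fun a => front p ρ a θ) α)
            (deriv (fun b => front p ρ α b) θ))
          (frontNormal ρ α θ)
        = (ρ θ * Real.cos α + deriv ρ θ * Real.sin α) *
            Real.sqrt (1 + ρ θ ^ 2 * Real.sin α ^ 2)
      ∧ (¬ LinearIndependent ℝ
            ![deriv (fun a => front p ρ a θ) α,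
              deriv (fun b => front p ρ α b) θ]
          ↔ ρ θ * Real.cos α + deriv ρ θ * Real.sin α = 0) := by
  -- differentiability of p and its derivatives
  have hp' : ContDiff ℝ ((⊤ : ℕ∞) : WithTop ℕ∞) p := hp.of_le (by simp)
  have hp1 : Differentiable ℝ p := (contDiff_infty_iff_deriv.1 hp').1
  have hpd : ContDiff ℝ ((⊤ : ℕ∞) : WithTop ℕ∞) (deriv p) := (contDiff_infty_iff_deriv.1 hp').2
  have hp2 : Differentiable ℝ (deriv p) := (contDiff_infty_iff_deriv.1 hpd).1
  have hpdd : ContDiff ℝ ((⊤ : ℕ∞) : WithTop ℕ∞) (deriv (deriv p)) := (contDiff_infty_iff_deriv.1 hpd).2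
  have hp3 : Differentiable ℝ (deriv (deriv p)) := (contDiff_infty_iff_deriv.1 hpdd).1
  have hco : ρ = fun b => p b + deriv (deriv p) b := funext hρ
  have hρdiff : Differentiable ℝ ρ := by rw [hco]; exact hp1.add hp3
  intro α θ
  -- abbreviations
  set r := ρ θ with hr
  set dr := deriv ρ θ with hdr
  -- derivative in α
  have hu : deriv (fun a => front p ρ a θ) α =
      (1, (r * Real.cos α * (-Real.sin (θ + α)) + r * Real.sin α * (-Real.cos (θ + α)),
           r * Real.cos α * Real.cos (θ + α) + r * Real.sin α * (-Real.sin (θ + α)))) := by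
    have hsin : HasDerivAt (fun a : ℝ => Real.sin (θ + a)) (Real.cos (θ + α)) α := by
      simpa [Function.comp_def] using (Real.hasDerivAt_sin (θ + α)).comp α ((hasDerivAt_id α).const_add θ)
    have hcos : HasDerivAt (fun a : ℝ => Real.cos (θ + a)) (-Real.sin (θ + α)) α := by
      simpa [Function.comp_def] using (Real.hasDerivAt_cos (θ + α)).comp α ((hasDerivAt_id α).const_add θ)
    have hrs : HasDerivAt (fun a : ℝ => r * Real.sin a) (r * Real.cos α) α :=
      (Real.hasDerivAt_sin α).const_mul r
    have h1 : HasDerivAt (fun a : ℝ =>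
        (hedgehogParam p θ).1 + r * Real.sin a * (-Real.sin (θ + a)))
        (r * Real.cos α * (-Real.sin (θ + α)) + r * Real.sin α * (-Real.cos (θ + α))) α := by
      have := (hrs.mul hsin.neg).const_add (hedgehogParam p θ).1
      refine this.congr_deriv ?_; simp only [Pi.neg_apply]
    have h2 : HasDerivAt (fun a : ℝ =>
        (hedgehogParam p θ).2 + r * Real.sin a * Real.cos (θ + a))
        (r * Real.cos α * Real.cos (θ + α) + r * Real.sin α * (-Real.sin (θ + α))) α := by
      have := (hrs.mul hcos).const_add (hedgehogParam p θ).2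
      exact this.congr_deriv (by ring)
    have hF : HasDerivAt (fun a => front p ρ a θ)
        ((1 : ℝ), (r * Real.cos α * (-Real.sin (θ + α)) + r * Real.sin α * (-Real.cos (θ + α)),
           r * Real.cos α * Real.cos (θ + α) + r * Real.sin α * (-Real.sin (θ + α)))) α := by
      have := (hasDerivAt_id α).prodMk (h1.prodMk h2)
      exact this.congr_of_eventuallyEq (Filter.Eventually.of_forall fun a => by
        simp [front, hedgehogParam, tangentVec, Prod.ext_iff, smul_eq_mul, hr] <;> ring)
    exact hF.deriv
  -- derivative in θ
  have hv : deriv (fun b => front p ρ α b) θ =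
      (0, (deriv p θ * Real.cos θ - p θ * Real.sin θ
            - (deriv (deriv p) θ * Real.sin θ + deriv p θ * Real.cos θ)
            + (dr * Real.sin α * (-Real.sin (θ + α)) + r * Real.sin α * (-Real.cos (θ + α))),
           deriv p θ * Real.sin θ + p θ * Real.cos θ
            + (deriv (deriv p) θ * Real.cos θ - deriv p θ * Real.sin θ)
            + (dr * Real.sin α * Real.cos (θ + α) + r * Real.sin α * (-Real.sin (θ + α))))) := by
    have hsinb : HasDerivAt (fun b : ℝ => Real.sin b) (Real.cos θ) θ := Real.hasDerivAt_sin θ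
    have hcosb : HasDerivAt (fun b : ℝ => Real.cos b) (-Real.sin θ) θ := Real.hasDerivAt_cos θ
    have hsin' : HasDerivAt (fun b : ℝ => Real.sin (b + α)) (Real.cos (θ + α)) θ := by
      simpa [Function.comp_def] using (Real.hasDerivAt_sin (θ + α)).comp θ ((hasDerivAt_id θ).add_const α)
    have hcos' : HasDerivAt (fun b : ℝ => Real.cos (b + α)) (-Real.sin (θ + α)) θ := by
      simpa [Function.comp_def] using (Real.hasDerivAt_cos (θ + α)).comp θ ((hasDerivAt_id θ).add_const α)
    have hpde : HasDerivAt p (deriv p θ) θ := (hp1 θ).hasDerivAt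
    have hpde2 : HasDerivAt (deriv p) (deriv (deriv p) θ) θ := (hp2 θ).hasDerivAt
    have hρde : HasDerivAt ρ dr θ := (hρdiff θ).hasDerivAt
    have hρs : HasDerivAt (fun b : ℝ => ρ b * Real.sin α) (dr * Real.sin α) θ :=
      hρde.mul_const (Real.sin α)
    have h1 : HasDerivAt (fun b : ℝ =>
        (p b * Real.cos b - deriv p b * Real.sin b) + ρ b * Real.sin α * (-Real.sin (b + α)))
        (deriv p θ * Real.cos θ - p θ * Real.sin θ
            - (deriv (deriv p) θ * Real.sin θ + deriv p θ * Real.cos θ)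
            + (dr * Real.sin α * (-Real.sin (θ + α)) + r * Real.sin α * (-Real.cos (θ + α)))) θ := by
      have := ((hpde.mul hcosb).sub (hpde2.mul hsinb)).add (hρs.mul hsin'.neg)
      refine this.congr_deriv ?_; simp only [Pi.neg_apply, hr]; ring
    have h2 : HasDerivAt (fun b : ℝ =>
        (p b * Real.sin b + deriv p b * Real.cos b) + ρ b * Real.sin α * Real.cos (b + α))
        (deriv p θ * Real.sin θ + p θ * Real.cos θ
            + (deriv (deriv p) θ * Real.cos θ - deriv p θ * Real.sin θ)
            + (dr * Real.sin α * Real.cos (θ + α) + r * Real.sin α * (-Real.sin (θ + α)))) θ := by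
      have := ((hpde.mul hsinb).add (hpde2.mul hcosb)).add (hρs.mul hcos')
      refine this.congr_deriv ?_; simp only [hr]; ring
    have hF : HasDerivAt (fun b => front p ρ α b)
        ((0 : ℝ), (deriv p θ * Real.cos θ - p θ * Real.sin θ
            - (deriv (deriv p) θ * Real.sin θ + deriv p θ * Real.cos θ)
            + (dr * Real.sin α * (-Real.sin (θ + α)) + r * Real.sin α * (-Real.cos (θ + α))),
           deriv p θ * Real.sin θ + p θ * Real.cos θ
            + (deriv (deriv p) θ * Real.cos θ - deriv p θ * Real.sin θ)
            + (dr * Real.sin α * Real.cos (θ + α) + r * Real.sin α * (-Real.sin (θ + α))))) θ := by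
      have := (hasDerivAt_const θ α).prodMk (h1.prodMk h2)
      exact this.congr_of_eventuallyEq (Filter.Eventually.of_forall fun b => by
        simp [front, hedgehogParam, tangentVec, Prod.ext_iff, smul_eq_mul] <;> ring)
    exact hF.deriv
  -- trig substitutions
  have hsθ : Real.sin θ = Real.sin (θ + α) * Real.cos α - Real.cos (θ + α) * Real.sin α := by
    have := Real.sin_sub (θ + α) α; simpa using this
  have hcθ : Real.cos θ = Real.cos (θ + α) * Real.cos α + Real.sin (θ + α) * Real.sin α := by
    have := Real.cos_sub (θ + α) α; simpa using this
  have hpy : Real.sin (θ + α) ^ 2 + Real.cos (θ + α) ^ 2 = 1 := Real.sin_sq_add_cos_sq (θ + α)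
  set lam := r * Real.cos α + dr * Real.sin α with hlam
  -- the θ-derivative, simplified
  have hv2 : deriv (fun b => front p ρ α b) θ
      = (0, (-lam * Real.sin (θ + α), lam * Real.cos (θ + α))) := by
    rw [hv]
    refine Prod.ext rfl (Prod.ext ?_ ?_) <;>
      (simp only [hlam, hr, hdr, hρ θ, hsθ, hcθ]; ring)
  have key : dot3 (cross3 (deriv (fun a => front p ρ a θ) α)
      (deriv (fun b => front p ρ α b) θ))
      ((-(r * Real.sin α), normalVec (θ + α)) : ℝ × ℝ × ℝ)
      = lam * (1 + r ^ 2 * Real.sin α ^ 2) := by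
    rw [hu, hv2]
    simp only [dot3, cross3, normalVec, hlam]
    linear_combination ((r * Real.cos α + dr * Real.sin α)
      * (1 + r ^ 2 * Real.sin α ^ 2)) * hpy
  have hs0 : (0 : ℝ) < 1 + r ^ 2 * Real.sin α ^ 2 := by positivity
  have hsq : Real.sqrt (1 + r ^ 2 * Real.sin α ^ 2) ≠ 0 :=
    ne_of_gt (Real.sqrt_pos.2 hs0)
  constructor
  · -- area density formula
    have hdot : dot3 (cross3 (deriv (fun a => front p ρ a θ) α)
        (deriv (fun b => front p ρ α b) θ)) (frontNormal ρ α θ)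
        = (Real.sqrt (1 + r ^ 2 * Real.sin α ^ 2))⁻¹ *
          dot3 (cross3 (deriv (fun a => front p ρ a θ) α)
            (deriv (fun b => front p ρ α b) θ))
            ((-(r * Real.sin α), normalVec (θ + α)) : ℝ × ℝ × ℝ) := by
      simp only [frontNormal, dot3, Prod.smul_fst, Prod.smul_snd, smul_eq_mul, hr]
      ring
    rw [hdot, key]
    have hss : Real.sqrt (1 + r ^ 2 * Real.sin α ^ 2) * Real.sqrt (1 + r ^ 2 * Real.sin α ^ 2)
        = 1 + r ^ 2 * Real.sin α ^ 2 := Real.mul_self_sqrt hs0.le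
    rw [inv_mul_eq_div, div_eq_iff hsq]
    linear_combination (-lam) * hss
  · -- singularity criterion
    constructor
    · intro hLI
      rw [LinearIndependent.pair_iff] at hLI
      push_neg at hLI
      obtain ⟨s, t, hst, hne⟩ := hLI
      have h1 : s * 1 + t * 0 = 0 := by
        have := congrArg Prod.fst hst
        simpa [hu, hv2, Prod.smul_fst, smul_eq_mul] using this
      have hs : s = 0 := by linarith
      subst hs
      have ht : t ≠ 0 := by tauto
      have h21 : t * (-lam * Real.sin (θ + α)) = 0 := by
        have := congrArg (fun x : ℝ × ℝ × ℝ => x.2.1) hst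
        simpa [hu, hv2, Prod.smul_fst, Prod.smul_snd, smul_eq_mul] using this
      have h22 : t * (lam * Real.cos (θ + α)) = 0 := by
        have := congrArg (fun x : ℝ × ℝ × ℝ => x.2.2) hst
        simpa [hu, hv2, Prod.smul_fst, Prod.smul_snd, smul_eq_mul] using this
      have e1 : lam * Real.sin (θ + α) = 0 := by
        rcases mul_eq_zero.1 h21 with h | h
        · exact absurd h ht
        · linarith
      have e2 : lam * Real.cos (θ + α) = 0 := by
        rcases mul_eq_zero.1 h22 with h | h
        · exact absurd h ht
        · exact h
      have : lam = lam * (Real.sin (θ + α) ^ 2 + Real.cos (θ + α) ^ 2) := by rw [hpy]; ring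
      nlinarith [e1, e2, this]
    · intro hlam0
      intro hLI
      have hvz : (deriv (fun b => front p ρ α b) θ) = 0 := by
        rw [hv2, hlam0]
        norm_num
      have := hLI.ne_zero 1
      simp [hvz] at this
end

section
/- Let C be a hedgehog with radius of curvature ρ and extended evolutoids front F(α,θ) = (α, f(θ) + ρ(θ)sin α · t(θ+α)) with unit normal ν(α,θ) = (−ρ(θ)sin α, n(θ+α))/√(1+ρ²(θ)sin²α). For fixed α ∈ [0,π], the geodesic curvature of the curve θ ↦ F(α,θ) at a non-singular point, computed as κ_g = det(γ', γ'', ν)/|γ'|³ where γ(θ) = F(α,θ), equals −ρ(θ)sin α / (√(1 + ρ²(θ)sin²α) · |ρ(θ)cos α + ρ'(θ)sin α|). -/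
open Real
open scoped ContDiff

section EvolutoidAux


noncomputable def Dfun (ρ : ℝ → ℝ) (α : ℝ) : ℝ → ℝ :=
  fun x => ρ x * Real.cos α + deriv ρ x * Real.sin α

lemma iter_hasDeriv (p : ℝ → ℝ) (hp : ContDiff ℝ (⊤ : ℕ∞) p) (n : ℕ) (x : ℝ) :
    HasDerivAt (deriv^[n] p) (deriv^[n+1] p x) x := by
  have h : ContDiff ℝ ∞ (deriv^[n] p) := (hp.of_le (by simp)).iterate_deriv n
  have := (h.differentiable (by simp) x).hasDerivAt
  simpa [Function.iterate_succ_apply'] using this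

lemma sin_shift_hasDeriv (α x : ℝ) :
    HasDerivAt (fun y => Real.sin (y + α)) (Real.cos (x + α)) x := by
  simpa [Function.comp_def] using (Real.hasDerivAt_sin (x + α)).comp x ((hasDerivAt_id x).add_const α)

lemma cos_shift_hasDeriv (α x : ℝ) :
    HasDerivAt (fun y => Real.cos (y + α)) (-Real.sin (x + α)) x := by
  simpa [Function.comp_def] using (Real.hasDerivAt_cos (x + α)).comp x ((hasDerivAt_id x).add_const α)

lemma rho_hasDeriv (p ρ : ℝ → ℝ) (hp : ContDiff ℝ (⊤ : ℕ∞) p)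
    (hρ : ∀ θ, ρ θ = p θ + deriv (deriv p) θ) (x : ℝ) :
    HasDerivAt ρ (deriv p x + deriv (deriv (deriv p)) x) x := by
  have hρf : ρ = fun x => p x + deriv (deriv p) x := funext hρ
  rw [hρf]
  have h0 := iter_hasDeriv p hp 0 x
  have h2 := iter_hasDeriv p hp 2 x
  simp only [Function.iterate_succ_apply', Function.iterate_zero_apply] at h0 h2
  exact h0.add h2

lemma deriv_rho (p ρ : ℝ → ℝ) (hp : ContDiff ℝ (⊤ : ℕ∞) p)
    (hρ : ∀ θ, ρ θ = p θ + deriv (deriv p) θ) (x : ℝ) :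
    deriv ρ x = deriv p x + deriv (deriv (deriv p)) x :=
  (rho_hasDeriv p ρ hp hρ x).deriv

lemma front_hasDeriv (p ρ : ℝ → ℝ) (hp : ContDiff ℝ (⊤ : ℕ∞) p)
    (hρ : ∀ θ, ρ θ = p θ + deriv (deriv p) θ) (α x : ℝ) :
    HasDerivAt (fun b => front p ρ α b)
      ((0:ℝ), (-(Dfun ρ α x) * Real.sin (x + α), Dfun ρ α x * Real.cos (x + α))) x := by
  have hfront : (fun b => front p ρ α b) = fun b =>
      ((α : ℝ), (p b * Real.cos b - deriv p b * Real.sin b + ρ b * Real.sin α * -Real.sin (b + α),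
        p b * Real.sin b + deriv p b * Real.cos b + ρ b * Real.sin α * Real.cos (b + α))) := by
    funext b
    simp [front, hedgehogParam, tangentVec, Prod.ext_iff]
  rw [hfront]
  have h0 := iter_hasDeriv p hp 0 x
  have h1 := iter_hasDeriv p hp 1 x
  simp only [Function.iterate_succ_apply', Function.iterate_zero_apply,
    Function.iterate_one] at h0 h1
  have hρ' := rho_hasDeriv p ρ hp hρ x
  have hA : HasDerivAt
      (fun b => p b * Real.cos b - deriv p b * Real.sin b + ρ b * Real.sin α * -Real.sin (b + α))
      (-(Dfun ρ α x) * Real.sin (x + α)) x := by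
    have h := ((h0.mul (Real.hasDerivAt_cos x)).sub (h1.mul (Real.hasDerivAt_sin x))).add
      ((hρ'.mul_const (Real.sin α)).mul (sin_shift_hasDeriv α x).neg)
    refine h.congr_deriv (Eq.symm ?_)
    simp only [Dfun, hρ x, deriv_rho p ρ hp hρ x, Real.sin_add, Real.cos_add, Pi.neg_apply]
    linear_combination (-((p x + deriv (deriv p) x) * Real.sin x)) * Real.sin_sq_add_cos_sq α
  have hB : HasDerivAt
      (fun b => p b * Real.sin b + deriv p b * Real.cos b + ρ b * Real.sin α * Real.cos (b + α))
      (Dfun ρ α x * Real.cos (x + α)) x := by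
    have h := ((h0.mul (Real.hasDerivAt_sin x)).add (h1.mul (Real.hasDerivAt_cos x))).add
      ((hρ'.mul_const (Real.sin α)).mul (cos_shift_hasDeriv α x))
    refine h.congr_deriv (Eq.symm ?_)
    simp only [Dfun, hρ x, deriv_rho p ρ hp hρ x, Real.sin_add, Real.cos_add, Pi.neg_apply]
    linear_combination ((p x + deriv (deriv p) x) * Real.cos x) * Real.sin_sq_add_cos_sq α
  exact (hasDerivAt_const x α).prodMk (hA.prodMk hB)

lemma Dfun_hasDeriv (p ρ : ℝ → ℝ) (hp : ContDiff ℝ (⊤ : ℕ∞) p)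
    (hρ : ∀ θ, ρ θ = p θ + deriv (deriv p) θ) (α x : ℝ) :
    HasDerivAt (Dfun ρ α)
      ((deriv p x + deriv (deriv (deriv p)) x) * Real.cos α +
        (deriv (deriv p) x + deriv (deriv (deriv (deriv p))) x) * Real.sin α) x := by
  have hDf : Dfun ρ α = fun x =>
      (p x + deriv (deriv p) x) * Real.cos α +
        (deriv p x + deriv (deriv (deriv p)) x) * Real.sin α := by
    funext y; simp [Dfun, hρ y, deriv_rho p ρ hp hρ y]
  rw [hDf]
  have h0 := iter_hasDeriv p hp 0 x
  have h1 := iter_hasDeriv p hp 1 x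
  have h2 := iter_hasDeriv p hp 2 x
  have h3 := iter_hasDeriv p hp 3 x
  simp only [Function.iterate_succ_apply', Function.iterate_zero_apply,
    Function.iterate_one] at h0 h1 h2 h3
  exact ((h0.add h2).mul_const _).add ((h1.add h3).mul_const _)

end EvolutoidAux

theorem stmt14 (p ρ : ℝ → ℝ) (hp : ContDiff ℝ (⊤ : ℕ∞) p)
    (hper : Function.Periodic p (2 * Real.pi))
    (hρ : ∀ θ, ρ θ = p θ + deriv (deriv p) θ)
    (α : ℝ) (hα : α ∈ Set.Icc (0:ℝ) Real.pi) :
    ∀ θ : ℝ, ρ θ * Real.cos α + deriv ρ θ * Real.sin α ≠ 0 →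
      det3 (deriv (fun b => front p ρ α b) θ)
            (iteratedDeriv 2 (fun b => front p ρ α b) θ)
            (frontNormal ρ α θ)
          / (norm3 (deriv (fun b => front p ρ α b) θ)) ^ 3
        = -(ρ θ * Real.sin α) /
            (Real.sqrt (1 + ρ θ ^ 2 * Real.sin α ^ 2) *
              |ρ θ * Real.cos α + deriv ρ θ * Real.sin α|) := by
  intro θ hne
  set E : ℝ := (deriv p θ + deriv (deriv (deriv p)) θ) * Real.cos α +
      (deriv (deriv p) θ + deriv (deriv (deriv (deriv p))) θ) * Real.sin α with hE
  have derivF : deriv (fun b => front p ρ α b) =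
      fun x => ((0:ℝ), (-(Dfun ρ α x) * Real.sin (x + α), Dfun ρ α x * Real.cos (x + α))) :=
    funext fun x => (front_hasDeriv p ρ hp hρ α x).deriv
  have hG : HasDerivAt
      (fun x => ((0:ℝ), (-(Dfun ρ α x) * Real.sin (x + α), Dfun ρ α x * Real.cos (x + α))))
      ((0:ℝ), (-E * Real.sin (θ + α) + -(Dfun ρ α θ) * Real.cos (θ + α),
        E * Real.cos (θ + α) + Dfun ρ α θ * -Real.sin (θ + α))) θ := by
    refine (hasDerivAt_const θ (0:ℝ)).prodMk (HasDerivAt.prodMk ?_ ?_)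
    · exact ((Dfun_hasDeriv p ρ hp hρ α θ).neg).mul (by
        simpa [Function.comp_def] using (Real.hasDerivAt_sin (θ + α)).comp θ ((hasDerivAt_id θ).add_const α))
    · exact (Dfun_hasDeriv p ρ hp hρ α θ).mul (by
        simpa [Function.comp_def] using (Real.hasDerivAt_cos (θ + α)).comp θ ((hasDerivAt_id θ).add_const α))
  have hiter : iteratedDeriv 2 (fun b => front p ρ α b) θ =
      ((0:ℝ), (-E * Real.sin (θ + α) + -(Dfun ρ α θ) * Real.cos (θ + α),
        E * Real.cos (θ + α) + Dfun ρ α θ * -Real.sin (θ + α))) := by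
    rw [show (2:ℕ) = 1 + 1 from rfl, iteratedDeriv_succ, iteratedDeriv_one, derivF]
    exact hG.deriv
  rw [hiter, derivF]
  have hsc : Real.sin (θ + α) ^ 2 + Real.cos (θ + α) ^ 2 = 1 := Real.sin_sq_add_cos_sq _
  have hd : Dfun ρ α θ = ρ θ * Real.cos α + deriv ρ θ * Real.sin α := rfl
  have hne' : Dfun ρ α θ ≠ 0 := by rw [hd]; exact hne
  have hcpos : 0 < Real.sqrt (1 + ρ θ ^ 2 * Real.sin α ^ 2) :=
    Real.sqrt_pos.mpr (by positivity)
  have hnorm : norm3 ((0:ℝ), (-(Dfun ρ α θ) * Real.sin (θ + α), Dfun ρ α θ * Real.cos (θ + α)))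
      = |Dfun ρ α θ| := by
    have hdot : dot3 ((0:ℝ), (-(Dfun ρ α θ) * Real.sin (θ + α), Dfun ρ α θ * Real.cos (θ + α)))
        ((0:ℝ), (-(Dfun ρ α θ) * Real.sin (θ + α), Dfun ρ α θ * Real.cos (θ + α)))
        = (Dfun ρ α θ) ^ 2 := by
      simp only [dot3]
      linear_combination (Dfun ρ α θ) ^ 2 * hsc
    rw [norm3, hdot, Real.sqrt_sq_eq_abs]
  have hdet : det3 ((0:ℝ), (-(Dfun ρ α θ) * Real.sin (θ + α), Dfun ρ α θ * Real.cos (θ + α)))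
      ((0:ℝ), (-E * Real.sin (θ + α) + -(Dfun ρ α θ) * Real.cos (θ + α),
        E * Real.cos (θ + α) + Dfun ρ α θ * -Real.sin (θ + α)))
      (frontNormal ρ α θ)
      = -(ρ θ * Real.sin α) * (Dfun ρ α θ) ^ 2 *
          (Real.sqrt (1 + ρ θ ^ 2 * Real.sin α ^ 2))⁻¹ := by
    simp only [det3, cross3, dot3, frontNormal, normalVec, Prod.smul_mk, smul_eq_mul,
      Prod.fst, Prod.snd]
    linear_combination (-(ρ θ * Real.sin α) * (Dfun ρ α θ) ^ 2 *
      (Real.sqrt (1 + ρ θ ^ 2 * Real.sin α ^ 2))⁻¹) * hsc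
  rw [hnorm, hdet, hd] at *
  have habs : |ρ θ * Real.cos α + deriv ρ θ * Real.sin α| ≠ 0 := abs_ne_zero.mpr hne
  have hcube : |ρ θ * Real.cos α + deriv ρ θ * Real.sin α| ^ 3 =
      (ρ θ * Real.cos α + deriv ρ θ * Real.sin α) ^ 2 *
        |ρ θ * Real.cos α + deriv ρ θ * Real.sin α| := by
    rw [pow_succ, sq_abs]
  rw [hcube]
  field_simp
  have hne2 : ρ θ * Real.cos α + Real.sin α * deriv ρ θ ≠ 0 := by rwa [mul_comm (Real.sin α)]
  field_simp
end

section
/- With notation as for the extended evolutoids front of a hedgehog with radius of curvature ρ, the geodesic curvature density satisfies κ_g(θ)·|γ_α'(θ)| = −ρ(θ)sin α / √(1 + ρ²(θ)sin²α), where γ_α(θ) = F(α,θ); hence for a closed hedgehog the total geodesic curvature ∫ κ_g dτ of the boundary curves α = 0 and α = π of M = [0,π] × S¹ is zero. -/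
open Real

/-! ### Auxiliary lemmas -/

lemma smooth_deriv {p : ℝ → ℝ} (hp : ContDiff ℝ (⊤:ℕ∞) p) : ContDiff ℝ (⊤:ℕ∞) (deriv p) :=
  (contDiff_infty_iff_deriv.mp hp).2

lemma hdAt {p : ℝ → ℝ} (hp : ContDiff ℝ (⊤:ℕ∞) p) (θ : ℝ) : HasDerivAt p (deriv p θ) θ :=
  (hp.differentiable (by simp) θ).hasDerivAt

lemma hsinAt (α θ : ℝ) : HasDerivAt (fun b => Real.sin (b + α)) (Real.cos (θ + α)) θ := by
  simpa [Function.comp_def] using (Real.hasDerivAt_sin (θ + α)).comp θ ((hasDerivAt_id θ).add_const α)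

lemma hcosAt (α θ : ℝ) : HasDerivAt (fun b => Real.cos (b + α)) (-Real.sin (θ + α)) θ := by
  simpa [Function.comp_def] using (Real.hasDerivAt_cos (θ + α)).comp θ ((hasDerivAt_id θ).add_const α)

/-- `G p α θ = ρ(θ) cos α + ρ'(θ) sin α`. -/
noncomputable def G (p : ℝ → ℝ) (α θ : ℝ) : ℝ :=
  (p θ + deriv (deriv p) θ) * Real.cos α
    + (deriv p θ + deriv (deriv (deriv p)) θ) * Real.sin α

noncomputable def G' (p : ℝ → ℝ) (α θ : ℝ) : ℝ :=
  (deriv p θ + deriv (deriv (deriv p)) θ) * Real.cos α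
    + (deriv (deriv p) θ + deriv (deriv (deriv (deriv p))) θ) * Real.sin α

lemma frontHasDeriv (p : ℝ → ℝ) (hp : ContDiff ℝ (⊤:ℕ∞) p) (α θ : ℝ) :
    HasDerivAt (fun b => front p (fun x => p x + deriv (deriv p) x) α b)
      (0, (G p α θ * (-Real.sin (θ + α)), G p α θ * Real.cos (θ + α))) θ := by
  have hq := smooth_deriv hp
  have hr := smooth_deriv hq
  have hfun : (fun b => front p (fun x => p x + deriv (deriv p) x) α b)
      = fun b => ((α:ℝ),
          (p b * Real.cos b - deriv p b * Real.sin b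
            + (p b + deriv (deriv p) b) * Real.sin α * (-Real.sin (b + α)),
           p b * Real.sin b + deriv p b * Real.cos b
            + (p b + deriv (deriv p) b) * Real.sin α * Real.cos (b + α))) := by
    funext b
    simp only [front, hedgehogParam, tangentVec, Prod.smul_mk, smul_eq_mul, Prod.mk_add_mk,
      Prod.mk.injEq, true_and]
  rw [hfun]
  refine (hasDerivAt_const θ (α:ℝ)).prodMk (HasDerivAt.prodMk ?_ ?_)
  · have hA := (((hdAt hp θ).mul (Real.hasDerivAt_cos θ)).sub
        ((hdAt hq θ).mul (Real.hasDerivAt_sin θ))).add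
      ((((hdAt hp θ).add (hdAt hr θ)).mul_const (Real.sin α)).mul (hsinAt α θ).neg)
    convert hA using 1
    · rfl
    simp only [G, Real.sin_add, Real.cos_add, Pi.neg_apply, Pi.add_apply]
    linear_combination (-(p θ + deriv (deriv p) θ) * Real.sin θ) * Real.sin_sq_add_cos_sq α
  · have hB := (((hdAt hp θ).mul (Real.hasDerivAt_sin θ)).add
        ((hdAt hq θ).mul (Real.hasDerivAt_cos θ))).add
      ((((hdAt hp θ).add (hdAt hr θ)).mul_const (Real.sin α)).mul (hcosAt α θ))
    convert hB using 1
    · rfl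
    simp only [G, Real.sin_add, Real.cos_add, Pi.neg_apply, Pi.add_apply]
    linear_combination ((p θ + deriv (deriv p) θ) * Real.cos θ) * Real.sin_sq_add_cos_sq α

lemma GHasDeriv (p : ℝ → ℝ) (hp : ContDiff ℝ (⊤:ℕ∞) p) (α θ : ℝ) :
    HasDerivAt (G p α) (G' p α θ) θ := by
  have hq := smooth_deriv hp
  have hr := smooth_deriv hq
  have hs := smooth_deriv hr
  exact (((hdAt hp θ).add (hdAt hr θ)).mul_const (Real.cos α)).add
    (((hdAt hq θ).add (hdAt hs θ)).mul_const (Real.sin α))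

lemma frontDeriv_eq (p : ℝ → ℝ) (hp : ContDiff ℝ (⊤:ℕ∞) p) (α : ℝ) :
    deriv (fun b => front p (fun x => p x + deriv (deriv p) x) α b)
      = fun θ => ((0:ℝ), (G p α θ * (-Real.sin (θ + α)), G p α θ * Real.cos (θ + α))) :=
  funext fun θ => (frontHasDeriv p hp α θ).deriv

lemma frontDeriv2_eq (p : ℝ → ℝ) (hp : ContDiff ℝ (⊤:ℕ∞) p) (α θ : ℝ) :
    iteratedDeriv 2 (fun b => front p (fun x => p x + deriv (deriv p) x) α b) θ
      = ((0:ℝ), (G' p α θ * (-Real.sin (θ + α)) + G p α θ * (-Real.cos (θ + α)),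
           G' p α θ * Real.cos (θ + α) + G p α θ * (-Real.sin (θ + α)))) := by
  have h2 : iteratedDeriv 2 (fun b => front p (fun x => p x + deriv (deriv p) x) α b)
      = deriv (deriv (fun b => front p (fun x => p x + deriv (deriv p) x) α b)) := by
    simp [iteratedDeriv_succ, iteratedDeriv_one]
  rw [h2, frontDeriv_eq p hp α]
  refine HasDerivAt.deriv ?_
  exact (hasDerivAt_const θ (0:ℝ)).prodMk
    (((GHasDeriv p hp α θ).mul (hsinAt α θ).neg).prodMk ((GHasDeriv p hp α θ).mul (hcosAt α θ)))

lemma det3_structure (a1 a2 b1 b2 c w1 w2 w3 : ℝ) :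
    det3 ((0:ℝ),(a1,a2)) ((0:ℝ),(b1,b2)) (c • ((w1,(w2,w3)) : ℝ×ℝ×ℝ))
      = (a1*b2 - a2*b1) * (c*w1) := by
  simp only [det3, cross3, dot3, Prod.smul_mk, smul_eq_mul]
  ring

lemma det3_main (g h sn cs c w1 w2 w3 : ℝ) (hsc : sn^2 + cs^2 = 1) :
    det3 ((0:ℝ),(g * (-sn), g * cs))
      ((0:ℝ),(h * (-sn) + g * (-cs), h * cs + g * (-sn)))
      (c • ((w1,(w2,w3)) : ℝ×ℝ×ℝ)) = g^2 * (c*w1) := by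
  rw [det3_structure]
  linear_combination (c*w1*g^2) * hsc

lemma norm3_eq (g sn cs : ℝ) (hsc : sn^2 + cs^2 = 1) :
    norm3 ((0:ℝ), (g * (-sn), g * cs)) = |g| := by
  have hd : dot3 ((0:ℝ),(g * (-sn), g * cs)) ((0:ℝ),(g * (-sn), g * cs)) = g^2 := by
    simp only [dot3]
    nlinarith [hsc]
  rw [norm3, hd, Real.sqrt_sq_eq_abs]

theorem stmt15 (p ρ : ℝ → ℝ) (hp : ContDiff ℝ (⊤ : ℕ∞) p)
    (hper : Function.Periodic p (2 * Real.pi))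
    (hρ : ∀ θ, ρ θ = p θ + deriv (deriv p) θ) :
    (∀ α θ : ℝ, ρ θ * Real.cos α + deriv ρ θ * Real.sin α ≠ 0 →
      (det3 (deriv (fun b => front p ρ α b) θ)
            (iteratedDeriv 2 (fun b => front p ρ α b) θ)
            (frontNormal ρ α θ)
          / (norm3 (deriv (fun b => front p ρ α b) θ)) ^ 3)
        * norm3 (deriv (fun b => front p ρ α b) θ)
        = -(ρ θ * Real.sin α) / Real.sqrt (1 + ρ θ ^ 2 * Real.sin α ^ 2))
    ∧ (∫ θ in (0:ℝ)..(2 * Real.pi),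
        det3 (deriv (fun b => front p ρ 0 b) θ)
            (iteratedDeriv 2 (fun b => front p ρ 0 b) θ)
            (frontNormal ρ 0 θ)
          / (norm3 (deriv (fun b => front p ρ 0 b) θ)) ^ 2) = 0
    ∧ (∫ θ in (0:ℝ)..(2 * Real.pi),
        det3 (deriv (fun b => front p ρ Real.pi b) θ)
            (iteratedDeriv 2 (fun b => front p ρ Real.pi b) θ)
            (frontNormal ρ Real.pi θ)
          / (norm3 (deriv (fun b => front p ρ Real.pi b) θ)) ^ 2) = 0 := by
  have hρfun : ρ = fun x => p x + deriv (deriv p) x := funext hρ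
  subst hρfun
  have hp' : ContDiff ℝ (⊤:ℕ∞) p := hp.of_le (by simp)
  have hq := smooth_deriv hp'
  have hr := smooth_deriv hq
  have hdρ : ∀ θ : ℝ, deriv (fun x => p x + deriv (deriv p) x) θ
      = deriv p θ + deriv (deriv (deriv p)) θ :=
    fun θ => ((hdAt hp' θ).add (hdAt hr θ)).deriv
  refine ⟨?_, ?_, ?_⟩
  · intro α θ hg
    have hG : G p α θ ≠ 0 := by
      simpa only [G, hdρ θ] using hg
    have hsc : Real.sin (θ + α)^2 + Real.cos (θ + α)^2 = 1 := Real.sin_sq_add_cos_sq _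
    simp only [frontDeriv_eq p hp' α, frontDeriv2_eq p hp' α θ, frontNormal, normalVec]
    rw [det3_main _ _ _ _ _ _ _ _ hsc, norm3_eq _ _ _ hsc]
    have hS : (0:ℝ) < Real.sqrt (1 + (p θ + deriv (deriv p) θ) ^ 2 * Real.sin α ^ 2) :=
      Real.sqrt_pos.mpr (by positivity)
    have habs : |G p α θ| ≠ 0 := abs_ne_zero.mpr hG
    have h3 : |G p α θ| ^ 3 = G p α θ ^ 2 * |G p α θ| := by
      rw [pow_succ, sq_abs]
    rw [h3]
    field_simp
  · have h0 : ∀ θ : ℝ,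
        det3 (deriv (fun b => front p (fun x => p x + deriv (deriv p) x) 0 b) θ)
          (iteratedDeriv 2 (fun b => front p (fun x => p x + deriv (deriv p) x) 0 b) θ)
          (frontNormal (fun x => p x + deriv (deriv p) x) 0 θ) = 0 := by
      intro θ
      simp only [frontDeriv_eq p hp' 0, frontDeriv2_eq p hp' 0 θ, frontNormal, normalVec]
      rw [det3_main _ _ _ _ _ _ _ _ (Real.sin_sq_add_cos_sq _)]
      simp
    simp only [h0, zero_div, intervalIntegral.integral_zero]
  · have h0 : ∀ θ : ℝ,
        det3 (deriv (fun b => front p (fun x => p x + deriv (deriv p) x) Real.pi b) θ)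
          (iteratedDeriv 2 (fun b => front p (fun x => p x + deriv (deriv p) x) Real.pi b) θ)
          (frontNormal (fun x => p x + deriv (deriv p) x) Real.pi θ) = 0 := by
      intro θ
      simp only [frontDeriv_eq p hp' Real.pi, frontDeriv2_eq p hp' Real.pi θ, frontNormal,
        normalVec]
      rw [det3_main _ _ _ _ _ _ _ _ (Real.sin_sq_add_cos_sq _)]
      simp
    simp only [h0, zero_div, intervalIntegral.integral_zero]
end

section
/- Let F(α,θ) = (α, f(θ) + ρ(θ)sin α · t(θ+α)) be the extended evolutoids front of a hedgehog with radius of curvature ρ, with unit normal ν(α,θ) = (−ρ(θ)sin α, n(θ+α))/√(1+ρ²(θ)sin²α). At a non-singular point (α,θ), the Gaussian curvature K = det(dν)/det(dF ∘ first fundamental form) of the front equals (ρ(θ)cos α − ρ'(θ)sin α) / ((1 + ρ²(θ)sin²α)² · (ρ(θ)cos α + ρ'(θ)sin α)); equivalently, K·|λ| = (ρ cos α − ρ' sin α)·sgn(ρ cos α + ρ' sin α)/(1 + ρ² sin²α)^{3/2}, where λ = (ρ cos α + ρ' sin α)√(1+ρ² sin²α). -/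
open Real

set_option maxHeartbeats 1000000 in
theorem stmt16 (p ρ : ℝ → ℝ) (hp : ContDiff ℝ (⊤ : ℕ∞) p)
    (hper : Function.Periodic p (2 * Real.pi))
    (hρ : ∀ θ, ρ θ = p θ + deriv (deriv p) θ) :
    ∀ α θ : ℝ, ρ θ * Real.cos α + deriv ρ θ * Real.sin α ≠ 0 →
      let Fa := deriv (fun a => front p ρ a θ) α
      let Ft := deriv (fun b => front p ρ α b) θ
      let Na := deriv (fun a => frontNormal ρ a θ) α
      let Nt := deriv (fun b => frontNormal ρ α b) θ
      let E := dot3 Fa Fa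
      let F₁ := dot3 Fa Ft
      let G := dot3 Ft Ft
      let L := -(dot3 Fa Na)
      let Mm := -(dot3 Fa Nt)
      let N := -(dot3 Ft Nt)
      let K := (L * N - Mm * Mm) / (E * G - F₁ * F₁)
      K = (ρ θ * Real.cos α - deriv ρ θ * Real.sin α) /
            ((1 + ρ θ ^ 2 * Real.sin α ^ 2) ^ 2 *
              (ρ θ * Real.cos α + deriv ρ θ * Real.sin α))
      ∧ K * |(ρ θ * Real.cos α + deriv ρ θ * Real.sin α) *
              Real.sqrt (1 + ρ θ ^ 2 * Real.sin α ^ 2)|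
        = (ρ θ * Real.cos α - deriv ρ θ * Real.sin α) *
            Real.sign (ρ θ * Real.cos α + deriv ρ θ * Real.sin α) /
              Real.sqrt ((1 + ρ θ ^ 2 * Real.sin α ^ 2) ^ 3) := by
  
  have hp0 : ContDiff ℝ ((⊤ : ℕ∞) : WithTop ℕ∞) p := hp.of_le (by simp)
  have hp1 : ContDiff ℝ ((⊤ : ℕ∞) : WithTop ℕ∞) (deriv p) := (contDiff_infty_iff_deriv.mp hp0).2
  have hp2 : ContDiff ℝ ((⊤ : ℕ∞) : WithTop ℕ∞) (deriv (deriv p)) := (contDiff_infty_iff_deriv.mp hp1).2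
  have hpD : Differentiable ℝ p := (contDiff_infty_iff_deriv.mp hp0).1
  have hp'D : Differentiable ℝ (deriv p) := (contDiff_infty_iff_deriv.mp hp1).1
  have hp''D : Differentiable ℝ (deriv (deriv p)) := (contDiff_infty_iff_deriv.mp hp2).1
  intro α θ hlam
  intro Fa Ft Na Nt E F₁ G L Mm N K
  have hpθ : HasDerivAt p (deriv p θ) θ := (hpD θ).hasDerivAt
  have hp'θ : HasDerivAt (deriv p) (deriv (deriv p) θ) θ := (hp'D θ).hasDerivAt
  have hρfun : ρ = fun x => p x + deriv (deriv p) x := funext hρ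
  have hρθ : HasDerivAt ρ (deriv ρ θ) θ := by
    have : DifferentiableAt ℝ ρ θ := by rw [hρfun]; exact (hpD θ).add (hp''D θ)
    exact this.hasDerivAt
  have hQpos : (0:ℝ) < 1 + ρ θ ^ 2 * Real.sin α ^ 2 := by positivity
  have hQ0 : (1 + ρ θ ^ 2 * Real.sin α ^ 2) ≠ 0 := ne_of_gt hQpos
  set S := Real.sqrt (1 + ρ θ ^ 2 * Real.sin α ^ 2) with hSdef
  have hSpos : 0 < S := Real.sqrt_pos.mpr hQpos
  have hS0 : S ≠ 0 := ne_of_gt hSpos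
  have hS2 : S ^ 2 = 1 + ρ θ ^ 2 * Real.sin α ^ 2 := Real.sq_sqrt (le_of_lt hQpos)
  have hA : Real.sin (θ + α) ^ 2 + Real.cos (θ + α) ^ 2 = 1 := Real.sin_sq_add_cos_sq _
  have ha : Real.sin α ^ 2 + Real.cos α ^ 2 = 1 := Real.sin_sq_add_cos_sq _
  -- derivatives of sin/cos of shifted arguments
  have hsin1 : HasDerivAt (fun a : ℝ => Real.sin (θ + a)) (Real.cos (θ + α)) α := by
    simpa [Function.comp_def] using (Real.hasDerivAt_sin (θ + α)).comp α ((hasDerivAt_id α).const_add θ)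
  have hcos1 : HasDerivAt (fun a : ℝ => Real.cos (θ + a)) (-Real.sin (θ + α)) α := by
    simpa [Function.comp_def] using (Real.hasDerivAt_cos (θ + α)).comp α ((hasDerivAt_id α).const_add θ)
  have hsin2 : HasDerivAt (fun b : ℝ => Real.sin (b + α)) (Real.cos (θ + α)) θ := by
    simpa [Function.comp_def] using (Real.hasDerivAt_sin (θ + α)).comp θ ((hasDerivAt_id θ).add_const α)
  have hcos2 : HasDerivAt (fun b : ℝ => Real.cos (b + α)) (-Real.sin (θ + α)) θ := by
    simpa [Function.comp_def] using (Real.hasDerivAt_cos (θ + α)).comp θ ((hasDerivAt_id θ).add_const α)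
  -- Fa
  have hX : HasDerivAt
      (fun a : ℝ => p θ * Real.cos θ - deriv p θ * Real.sin θ + ρ θ * Real.sin a * -Real.sin (θ + a))
      (ρ θ * Real.cos α * -Real.sin (θ + α) + ρ θ * Real.sin α * -Real.cos (θ + α)) α :=
    ((((Real.hasDerivAt_sin α).const_mul (ρ θ)).mul hsin1.neg).const_add _)
  have hY : HasDerivAt
      (fun a : ℝ => p θ * Real.sin θ + deriv p θ * Real.cos θ + ρ θ * Real.sin a * Real.cos (θ + a))
      (ρ θ * Real.cos α * Real.cos (θ + α) + ρ θ * Real.sin α * -Real.sin (θ + α)) α :=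
    ((((Real.hasDerivAt_sin α).const_mul (ρ θ)).mul hcos1).const_add _)
  have hFaV : Fa = (1,
      ρ θ * Real.cos α * -Real.sin (θ + α) + ρ θ * Real.sin α * -Real.cos (θ + α),
      ρ θ * Real.cos α * Real.cos (θ + α) + ρ θ * Real.sin α * -Real.sin (θ + α)) := by
    have heq : (fun a => front p ρ a θ) = fun a => ((a : ℝ),
        (p θ * Real.cos θ - deriv p θ * Real.sin θ + ρ θ * Real.sin a * -Real.sin (θ + a),
         p θ * Real.sin θ + deriv p θ * Real.cos θ + ρ θ * Real.sin a * Real.cos (θ + a))) := by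
      funext a
      simp only [front, hedgehogParam, tangentVec, Prod.smul_mk, smul_eq_mul, Prod.mk_add_mk,
        Prod.mk.injEq]
    show deriv (fun a => front p ρ a θ) α = _
    rw [heq]
    exact ((hasDerivAt_id α).prodMk (hX.prodMk hY)).deriv
  -- Ft
  have hXt : HasDerivAt
      (fun b : ℝ => p b * Real.cos b - deriv p b * Real.sin b + ρ b * Real.sin α * -Real.sin (b + α))
      ((deriv p θ * Real.cos θ + p θ * -Real.sin θ) -
        (deriv (deriv p) θ * Real.sin θ + deriv p θ * Real.cos θ) +
        (deriv ρ θ * Real.sin α * -Real.sin (θ + α) + ρ θ * Real.sin α * -Real.cos (θ + α))) θ :=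
    ((hpθ.mul (Real.hasDerivAt_cos θ)).sub (hp'θ.mul (Real.hasDerivAt_sin θ))).add
      ((hρθ.mul_const (Real.sin α)).mul hsin2.neg)
  have hYt : HasDerivAt
      (fun b : ℝ => p b * Real.sin b + deriv p b * Real.cos b + ρ b * Real.sin α * Real.cos (b + α))
      ((deriv p θ * Real.sin θ + p θ * Real.cos θ) +
        (deriv (deriv p) θ * Real.cos θ + deriv p θ * -Real.sin θ) +
        (deriv ρ θ * Real.sin α * Real.cos (θ + α) + ρ θ * Real.sin α * -Real.sin (θ + α))) θ :=
    ((hpθ.mul (Real.hasDerivAt_sin θ)).add (hp'θ.mul (Real.hasDerivAt_cos θ))).add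
      ((hρθ.mul_const (Real.sin α)).mul hcos2)
  have hsinθ : Real.sin θ = Real.sin (θ + α) * Real.cos α - Real.cos (θ + α) * Real.sin α := by
    have h := Real.sin_sub (θ + α) α
    rw [add_sub_cancel_right] at h
    exact h
  have hcosθ : Real.cos θ = Real.cos (θ + α) * Real.cos α + Real.sin (θ + α) * Real.sin α := by
    have h := Real.cos_sub (θ + α) α
    rw [add_sub_cancel_right] at h
    exact h
  have hFtV : Ft = (0,
      -((ρ θ * Real.cos α + deriv ρ θ * Real.sin α) * Real.sin (θ + α)),
      (ρ θ * Real.cos α + deriv ρ θ * Real.sin α) * Real.cos (θ + α)) := by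
    have heq : (fun b => front p ρ α b) = fun b => ((α : ℝ),
        (p b * Real.cos b - deriv p b * Real.sin b + ρ b * Real.sin α * -Real.sin (b + α),
         p b * Real.sin b + deriv p b * Real.cos b + ρ b * Real.sin α * Real.cos (b + α))) := by
      funext b
      simp only [front, hedgehogParam, tangentVec, Prod.smul_mk, smul_eq_mul, Prod.mk_add_mk,
        Prod.mk.injEq]
    show deriv (fun b => front p ρ α b) θ = _
    rw [heq, ((hasDerivAt_const θ α).prodMk (hXt.prodMk hYt)).deriv]
    refine Prod.ext rfl (Prod.ext ?_ ?_) <;> simp only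
    · linear_combination (Real.sin θ) * hρ θ + (-(ρ θ)) * hsinθ
    · linear_combination (-Real.cos θ) * hρ θ + (ρ θ) * hcosθ
  -- Na
  have hwa : HasDerivAt (fun a : ℝ => 1 + ρ θ ^ 2 * Real.sin a ^ 2)
      (ρ θ ^ 2 * (2 * Real.sin α * Real.cos α)) α := by
    have h := (((Real.hasDerivAt_sin α).pow 2).const_mul (ρ θ ^ 2)).const_add 1
    simpa using h
  have hSa : HasDerivAt (fun a : ℝ => Real.sqrt (1 + ρ θ ^ 2 * Real.sin a ^ 2))
      (ρ θ ^ 2 * (2 * Real.sin α * Real.cos α) / (2 * S)) α := hwa.sqrt hQ0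
  have hSainv := hSa.inv hS0
  have hNa1 := hSainv.mul ((Real.hasDerivAt_sin α).const_mul (ρ θ)).neg
  have hNa2 := hSainv.mul hcos1.neg
  have hNa3 := hSainv.mul hsin1.neg
  have hNaV : Na = (-(ρ θ * Real.cos α) / S ^ 3,
      Real.sin (θ + α) / S + ρ θ ^ 2 * Real.sin α * Real.cos α * Real.cos (θ + α) / S ^ 3,
      -Real.cos (θ + α) / S + ρ θ ^ 2 * Real.sin α * Real.cos α * Real.sin (θ + α) / S ^ 3) := by
    have heq : (fun a => frontNormal ρ a θ) = fun a =>
        (((Real.sqrt (1 + ρ θ ^ 2 * Real.sin a ^ 2))⁻¹ * -(ρ θ * Real.sin a)),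
         ((Real.sqrt (1 + ρ θ ^ 2 * Real.sin a ^ 2))⁻¹ * -Real.cos (θ + a)),
         ((Real.sqrt (1 + ρ θ ^ 2 * Real.sin a ^ 2))⁻¹ * -Real.sin (θ + a))) := by
      funext a
      simp only [frontNormal, normalVec, Prod.smul_mk, smul_eq_mul]
    show deriv (fun a => frontNormal ρ a θ) α = _
    rw [heq]; refine ((hNa1.prodMk (hNa2.prodMk hNa3)).deriv).trans ?_
    refine Prod.ext ?_ (Prod.ext ?_ ?_) <;> simp only [Pi.inv_apply, Pi.neg_apply, Pi.mul_apply, ← hSdef]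
    · field_simp
      linear_combination (-ρ θ * Real.cos α) * hS2
    · field_simp
      linear_combination
    · field_simp
      linear_combination
  -- Nt
  have hwt : HasDerivAt (fun b : ℝ => 1 + ρ b ^ 2 * Real.sin α ^ 2)
      (2 * ρ θ * deriv ρ θ * Real.sin α ^ 2) θ := by
    have h := ((hρθ.pow 2).mul_const (Real.sin α ^ 2)).const_add 1
    simpa [mul_assoc, mul_comm, mul_left_comm] using h
  have hSt : HasDerivAt (fun b : ℝ => Real.sqrt (1 + ρ b ^ 2 * Real.sin α ^ 2))
      (2 * ρ θ * deriv ρ θ * Real.sin α ^ 2 / (2 * S)) θ := hwt.sqrt hQ0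
  have hStinv := hSt.inv hS0
  have hNt1 := hStinv.mul (hρθ.mul_const (Real.sin α)).neg
  have hNt2 := hStinv.mul hcos2.neg
  have hNt3 := hStinv.mul hsin2.neg
  have hNtV : Nt = (-(deriv ρ θ * Real.sin α) / S ^ 3,
      Real.sin (θ + α) / S + ρ θ * deriv ρ θ * Real.sin α ^ 2 * Real.cos (θ + α) / S ^ 3,
      -Real.cos (θ + α) / S + ρ θ * deriv ρ θ * Real.sin α ^ 2 * Real.sin (θ + α) / S ^ 3) := by
    have heq : (fun b => frontNormal ρ α b) = fun b =>
        (((Real.sqrt (1 + ρ b ^ 2 * Real.sin α ^ 2))⁻¹ * -(ρ b * Real.sin α)),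
         ((Real.sqrt (1 + ρ b ^ 2 * Real.sin α ^ 2))⁻¹ * -Real.cos (b + α)),
         ((Real.sqrt (1 + ρ b ^ 2 * Real.sin α ^ 2))⁻¹ * -Real.sin (b + α))) := by
      funext b
      simp only [frontNormal, normalVec, Prod.smul_mk, smul_eq_mul]
    show deriv (fun b => frontNormal ρ α b) θ = _
    rw [heq]; refine ((hNt1.prodMk (hNt2.prodMk hNt3)).deriv).trans ?_
    refine Prod.ext ?_ (Prod.ext ?_ ?_) <;> simp only [Pi.inv_apply, Pi.neg_apply, Pi.mul_apply, ← hSdef]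
    · field_simp
      linear_combination (-deriv ρ θ * Real.sin α) * hS2
    · field_simp
      linear_combination
    · field_simp
      linear_combination
  -- fundamental forms
  have hE : E = 1 + ρ θ ^ 2 := by
    show dot3 Fa Fa = _
    rw [hFaV]
    simp only [dot3]
    linear_combination (ρ θ ^ 2 * (Real.sin α ^ 2 + Real.cos α ^ 2)) * hA + ρ θ ^ 2 * ha
  have hF : F₁ = (ρ θ * Real.cos α + deriv ρ θ * Real.sin α) * (ρ θ * Real.cos α) := by
    show dot3 Fa Ft = _
    rw [hFaV, hFtV]
    simp only [dot3]
    linear_combination ((ρ θ * Real.cos α + deriv ρ θ * Real.sin α) * ρ θ * Real.cos α) * hA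
  have hG : G = (ρ θ * Real.cos α + deriv ρ θ * Real.sin α) ^ 2 := by
    show dot3 Ft Ft = _
    rw [hFtV]
    simp only [dot3]
    linear_combination ((ρ θ * Real.cos α + deriv ρ θ * Real.sin α) ^ 2) * hA
  have hL : L = 2 * ρ θ * Real.cos α / S := by
    show -(dot3 Fa Na) = _
    rw [hFaV, hNaV]
    simp only [dot3]
    field_simp
    linear_combination (ρ θ * S^2 * Real.cos α + ρ θ^3 * Real.cos α * Real.sin α^2) * hA - ρ θ * Real.cos α * hS2
  have hM : Mm = (ρ θ * Real.cos α + deriv ρ θ * Real.sin α) / S := by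
    show -(dot3 Fa Nt) = _
    rw [hFaV, hNtV]
    simp only [dot3]
    field_simp
    linear_combination (ρ θ * S^2 * Real.cos α + ρ θ^2 * deriv ρ θ * Real.sin α^3) * hA - deriv ρ θ * Real.sin α * hS2
  have hN : N = (ρ θ * Real.cos α + deriv ρ θ * Real.sin α) / S := by
    show -(dot3 Ft Nt) = _
    rw [hFtV, hNtV]
    simp only [dot3]
    field_simp
    linear_combination ((ρ θ * Real.cos α + deriv ρ θ * Real.sin α) * S^2) * hA
  have hden : E * G - F₁ * F₁ = (ρ θ * Real.cos α + deriv ρ θ * Real.sin α) ^ 2 * S ^ 2 := by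
    rw [hE, hF, hG]
    linear_combination ((ρ θ * Real.cos α + deriv ρ θ * Real.sin α) ^ 2) * (hS2.symm) + (-(ρ θ ^ 2) * (ρ θ * Real.cos α + deriv ρ θ * Real.sin α) ^ 2) * ha
  have hnum : L * N - Mm * Mm = (ρ θ * Real.cos α + deriv ρ θ * Real.sin α) *
      (ρ θ * Real.cos α - deriv ρ θ * Real.sin α) / S ^ 2 := by
    rw [hL, hM, hN]
    field_simp
    ring
  have hK : K = (ρ θ * Real.cos α - deriv ρ θ * Real.sin α) /
      ((1 + ρ θ ^ 2 * Real.sin α ^ 2) ^ 2 * (ρ θ * Real.cos α + deriv ρ θ * Real.sin α)) := by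
    show (L * N - Mm * Mm) / (E * G - F₁ * F₁) = _
    rw [hnum, hden, ← hS2]
    field_simp
  refine ⟨hK, ?_⟩
  have h3 : Real.sqrt ((1 + ρ θ ^ 2 * Real.sin α ^ 2) ^ 3) = S ^ 3 := by
    rw [← hS2, show (S ^ 2) ^ 3 = (S ^ 3) ^ 2 by ring, Real.sqrt_sq (by positivity)]
  rw [hK, h3, ← hS2]
  rcases hlam.lt_or_gt with hneg | hpos
  · rw [abs_of_neg (mul_neg_of_neg_of_pos hneg hSpos), Real.sign_of_neg hneg]
    field_simp
  · rw [abs_of_pos (mul_pos hpos hSpos), Real.sign_of_pos hpos]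
    field_simp
end
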